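/- arXiv:2204.03892 — 4 statements merged into one kernel-verified Lean document; each statement's English description precedes it below -/
import Mathlib

section
/- Let X be a shift space and C a right asymptotic class of X. Then ω(C) = Σ_{u ∈ LS_ω(C)} (ℓ_C(u) − 1), where both sides are simultaneously finite, ω(C) being one less than the number of orbits contained in C. -/
open scoped Classical

noncomputable section

variable {A B : Type*}

/-- The two-sided shift map. -/
def shiftZ (x : ℤ → A) : ℤ → A := fun n => x (n + 1)

/-- The one-sided shift map. -/
def shiftN (x : ℕ → A) : ℕ → A := fun n => x (n + 1)

/-- The one-sided sequence `x⁺` associated to a two-sided sequence. -/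
def plusSeq (x : ℤ → A) : ℕ → A := fun n => x (n : ℤ)

/-- The one-sided shift space `X⁺` associated to a set of two-sided sequences. -/
def SetPlus (X : Set (ℤ → A)) : Set (ℕ → A) := plusSeq '' X

/-- `X` is a (two-sided) shift space: closed and shift invariant. -/
def IsShiftZ [TopologicalSpace A] (X : Set (ℤ → A)) : Prop :=
  IsClosed X ∧ shiftZ '' X = X

/-- `X` is a one-sided shift space: closed and shift invariant. -/
def IsShiftN [TopologicalSpace A] (X : Set (ℕ → A)) : Prop :=
  IsClosed X ∧ shiftN '' X = X

/-- Image of a word under a morphism given by its values on letters. -/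
def wordImg (σ : A → List B) (w : List A) : List B := (w.map σ).flatten

/-- `σ(x₀ ⋯ x_{n-1})` for a one-sided sequence `x`. -/
def prefixImg (σ : A → List B) (x : ℕ → A) (n : ℕ) : List B :=
  wordImg σ (List.ofFn fun i : Fin n => x i)

/-- `y = σ(x)` for one-sided sequences, with `σ(x)` infinite. -/
def OneSidedImage (σ : A → List B) (x : ℕ → A) (y : ℕ → B) : Prop :=
  (∀ m : ℕ, ∃ n : ℕ, m ≤ (prefixImg σ x n).length) ∧
  ∀ n : ℕ, ∀ i : ℕ, ∀ h : i < (prefixImg σ x n).length, y i = (prefixImg σ x n).get ⟨i, h⟩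

/-- `σ(x_{[-n,m)})` for a two-sided sequence `x`. -/
def segImg (σ : A → List B) (x : ℤ → A) (n m : ℕ) : List B :=
  wordImg σ (List.ofFn fun i : Fin (n + m) => x ((i : ℤ) - (n : ℤ)))

/-- `|σ(x_{[-n,0)})|`. -/
def negLen (σ : A → List B) (x : ℤ → A) (n : ℕ) : ℕ :=
  (wordImg σ (List.ofFn fun i : Fin n => x ((i : ℤ) - (n : ℤ)))).length

/-- `y = σ(x)` for two-sided sequences, with `σ(x)` two-sided infinite
(the letter `x₀` is sent at position `0`). -/
def TwoSidedImage (σ : A → List B) (x : ℤ → A) (y : ℤ → B) : Prop :=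
  (∀ m : ℕ, ∃ n : ℕ, m ≤ (prefixImg σ (plusSeq x) n).length) ∧
  (∀ m : ℕ, ∃ n : ℕ, m ≤ negLen σ x n) ∧
  ∀ n m : ℕ, ∀ i : ℕ, ∀ h : i < (segImg σ x n m).length,
    y ((i : ℤ) - (negLen σ x n : ℤ)) = (segImg σ x n m).get ⟨i, h⟩

/-- `(x,k)` is a σ-representation of the two-sided sequence `y`, with `x ∈ X`. -/
def IsRepZ (σ : A → List B) (X : Set (ℤ → A)) (y : ℤ → B) (x : ℤ → A) (k : ℕ) : Prop :=
  x ∈ X ∧ k < (σ (x 0)).length ∧ ∃ z, TwoSidedImage σ x z ∧ ∀ n : ℤ, y n = z (n + k)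

/-- `σ` is recognizable on `X` at the two-sided point `y`. -/
def RecognizableAtZ (σ : A → List B) (X : Set (ℤ → A)) (y : ℤ → B) : Prop :=
  ∀ x k x' k', IsRepZ σ X y x k → IsRepZ σ X y x' k' → x = x' ∧ k = k'

/-- `σ` is recognizable on `X`. -/
def RecognizableZ (σ : A → List B) (X : Set (ℤ → A)) : Prop :=
  ∀ y : ℤ → B, RecognizableAtZ σ X y

/-- `(x,k)` is a σ-representation of the one-sided sequence `y`, with `x ∈ X`. -/
def IsRepN (σ : A → List B) (X : Set (ℕ → A)) (y : ℕ → B) (x : ℕ → A) (k : ℕ) : Prop :=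
  x ∈ X ∧ k < (σ (x 0)).length ∧ ∃ z, OneSidedImage σ x z ∧ ∀ n : ℕ, y n = z (n + k)

/-- `σ` is one-sided recognizable on `X` at `y`. -/
def RecognizableAtN (σ : A → List B) (X : Set (ℕ → A)) (y : ℕ → B) : Prop :=
  ∀ x k x' k', IsRepN σ X y x k → IsRepN σ X y x' k' → x = x' ∧ k = k'

/-- `σ` is one-sided recognizable on `X`. -/
def RecognizableN (σ : A → List B) (X : Set (ℕ → A)) : Prop :=
  ∀ y : ℕ → B, RecognizableAtN σ X y

/-- The set `C(x)` of cutting points of a two-sided sequence. -/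
def CutSet (σ : A → List B) (x : ℤ → A) : Set ℤ :=
  {m | ∃ n : ℕ, m = ((prefixImg σ (plusSeq x) n).length : ℤ)} ∪
  {m | ∃ n : ℕ, m = -((negLen σ x n : ℤ))}

/-- The set `C⁺(x)` of cutting points of a one-sided sequence. -/
def CutSetPlus (σ : A → List B) (x : ℕ → A) : Set ℕ :=
  {m | ∃ n : ℕ, m = (prefixImg σ x n).length}

/-- Recognizability in the sense of Mossé with scope `N` (two-sided windows). -/
def MosseRec (σ : A → List B) (x : ℤ → A) (y : ℤ → B) (N : ℕ) : Prop :=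
  ∀ i j : ℤ, (∀ d : ℤ, -(N : ℤ) ≤ d → d ≤ N → y (i + d) = y (j + d)) →
    (i ∈ CutSet σ x ↔ j ∈ CutSet σ x)

/-- One-sided recognizability in the sense of Mossé with scope `N`, for a two-sided point. -/
def MosseRecOne (σ : A → List B) (x : ℤ → A) (y : ℤ → B) (N : ℕ) : Prop :=
  ∀ i j : ℤ, (∀ d : ℕ, d < N → y (i + d) = y (j + d)) →
    (i ∈ CutSet σ x ↔ j ∈ CutSet σ x)

/-- One-sided recognizability in the sense of Mossé with scope `N`, for a one-sided point. -/
def MosseRecOneN (σ : A → List B) (x : ℕ → A) (y : ℕ → B) (N : ℕ) : Prop :=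
  ∀ i j : ℕ, (∀ d : ℕ, d < N → y (i + d) = y (j + d)) →
    (i ∈ CutSetPlus σ x ↔ j ∈ CutSetPlus σ x)

/-- The extension of `σ` to words. -/
def substWord (σ : A → List A) : List A → List A := fun w => wordImg σ w

/-- The `n`-th power of the endomorphism `σ`, as a map on letters. -/
def wordPow (σ : A → List A) (n : ℕ) : A → List A := fun a => (substWord σ)^[n] [a]

/-- `w` belongs to the language `L(σ)` of the endomorphism `σ`. -/
def InLangSigma (σ : A → List A) (w : List A) : Prop :=
  ∃ n : ℕ, ∃ a : A, w <:+: (substWord σ)^[n] [a]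

/-- The substitution shift `X(σ)`. -/
def Xsig (σ : A → List A) : Set (ℤ → A) :=
  {x | ∀ k : ℤ, ∀ n : ℕ, InLangSigma σ (List.ofFn fun i : Fin n => x (k + (i : ℤ)))}

/-- The (two-sided) orbit of a two-sided sequence under the shift. -/
def orbitZ (x : ℤ → A) : Set (ℤ → A) := {y | ∃ n : ℤ, ∀ i, y i = x (i + n)}

/-- The forward orbit of a one-sided sequence under the shift. -/
def orbitN (x : ℕ → A) : Set (ℕ → A) := {y | ∃ n : ℕ, ∀ i, y i = x (i + n)}

/-- A two-sided sequence is periodic. -/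
def PeriodicZ (x : ℤ → A) : Prop := ∃ n : ℕ, 1 ≤ n ∧ ∀ i, x (i + n) = x i

/-- A one-sided sequence is periodic. -/
def PeriodicN (x : ℕ → A) : Prop := ∃ n : ℕ, 1 ≤ n ∧ ∀ i, x (i + n) = x i

/-- Minimality of a two-sided shift space. -/
def MinimalZ [TopologicalSpace A] (X : Set (ℤ → A)) : Prop :=
  X.Nonempty ∧ ∀ x ∈ X, X ⊆ closure (orbitZ x)

/-- Minimality of a one-sided shift space. -/
def MinimalN [TopologicalSpace A] (X : Set (ℕ → A)) : Prop :=
  X.Nonempty ∧ ∀ x ∈ X, X ⊆ closure (orbitN x)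

/-- Prepend a letter to a one-sided sequence. -/
def consSeq (a : A) (x : ℕ → A) : ℕ → A := fun i => match i with
  | 0 => a
  | j + 1 => x j

/-- Prepend a word to a one-sided sequence. -/
def prependSeq (w : List A) (x : ℕ → A) : ℕ → A := fun i =>
  if h : i < w.length then w.get ⟨i, h⟩ else x (i - w.length)

/-- `u` is left-special in the one-sided shift `X`. -/
def LeftSpecial (X : Set (ℕ → A)) (u : ℕ → A) : Prop :=
  2 ≤ Nat.card {a : A // consSeq a u ∈ X}

/-- Two two-sided sequences are asymptotically equivalent. -/
def AsympEq (x y : ℤ → A) : Prop := ∃ n m : ℤ, ∀ i : ℕ, x (n + i) = y (m + i)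

/-- `C` is an asymptotic class of `X`. -/
def IsAsympClass (X : Set (ℤ → A)) (C : Set (ℤ → A)) : Prop :=
  ∃ x ∈ X, C = {y ∈ X | AsympEq x y}

/-- An asymptotic class is non-trivial if it is not reduced to a single orbit. -/
def NontrivialClass (C : Set (ℤ → A)) : Prop :=
  ∃ y ∈ C, ∃ z ∈ C, z ∉ orbitZ y

/-- The closure under the shift of `σ(X)`. -/
def imageShiftClosure [TopologicalSpace B] (σ : A → List B) (X : Set (ℤ → A)) :
    Set (ℤ → B) :=
  closure {y | ∃ x ∈ X, ∃ z, TwoSidedImage σ x z ∧ ∃ m : ℤ, ∀ i, y i = z (i + m)}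

/-- The set `o(C)` of orbits contained in `C`. -/
def orbitsIn (C : Set (ℤ → A)) : Set (Set (ℤ → A)) := {O | ∃ x ∈ C, O = orbitZ x}

/-- `ℓ_C(u)`: the number of letters `a` such that `x⁺ = au` for some `x ∈ C`. -/
def ellC (C : Set (ℤ → A)) (u : ℕ → A) : ℕ :=
  Nat.card {a : A // ∃ x ∈ C, plusSeq x = consSeq a u}

namespace Stmt5

variable {V : Type*} (f : V → V)

def IsPath (p : ℕ → V) : Prop := ∀ n, f (p (n + 1)) = p n

def pbar (p : ℕ → V) (t : ℤ) : V := if 0 ≤ t then p t.toNat else f^[(-t).toNat] (p 0)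

lemma pbar_natCast (p : ℕ → V) (n : ℕ) : pbar f p n = p n := by
  simp [pbar]

lemma pbar_step {p : ℕ → V} (hp : IsPath f p) (t : ℤ) : f (pbar f p (t + 1)) = pbar f p t := by
  rcases le_or_gt 0 t with h | h
  · have h1 : (0:ℤ) ≤ t + 1 := by omega
    have h2 : (t + 1).toNat = t.toNat + 1 := by omega
    simp only [pbar, if_pos h, if_pos h1, h2]
    exact hp _
  · rcases eq_or_lt_of_le (by omega : t + 1 ≤ 0) with h1 | h1
    · have ht : t = -1 := by omega
      subst ht
      simp [pbar]
    · have h2 : ¬ (0:ℤ) ≤ t + 1 := by omega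
      have h3 : ¬ (0:ℤ) ≤ t := by omega
      simp only [pbar, if_neg h2, if_neg h3]
      rw [← Function.iterate_succ_apply' f]
      congr 1
      omega

lemma pbar_det {p : ℕ → V} (hp : IsPath f p) (t : ℤ) (d : ℕ) :
    pbar f p t = f^[d] (pbar f p (t + d)) := by
  induction d with
  | zero => simp
  | succ d ih =>
    rw [ih, Function.iterate_succ_apply]
    congr 1
    rw [show t + (↑(d+1)) = (t + d) + 1 by push_cast; ring]
    exact (pbar_step f hp _).symm

lemma pbar_shift {p q : ℕ → V} (hp : IsPath f p) (hq : IsPath f q) (a b : ℕ)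
    (h : ∀ i : ℕ, p (a + i) = q (b + i)) (t : ℤ) :
    pbar f p (a + t) = pbar f q (b + t) := by
  set d := (-t).toNat with hd
  have htd : 0 ≤ t + d := by omega
  have h1 : pbar f p (a + t) = f^[d] (pbar f p ((a + t) + d)) := pbar_det f hp _ d
  have h2 : pbar f q (b + t) = f^[d] (pbar f q ((b + t) + d)) := pbar_det f hq _ d
  rw [h1, h2]
  congr 1
  have e1 : (a:ℤ) + t + d = ((a + (t + d).toNat : ℕ) : ℤ) := by push_cast; omega
  have e2 : (b:ℤ) + t + d = ((b + (t + d).toNat : ℕ) : ℤ) := by push_cast; omega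
  rw [e1, e2, pbar_natCast, pbar_natCast]
  exact h _

/-- The path space. -/
def Paths := {p : ℕ → V // IsPath f p}

/-- Tail-equivalence of paths. -/
def PathRel (p q : Paths f) : Prop := ∃ a b : ℕ, ∀ i : ℕ, p.1 (a + i) = q.1 (b + i)

lemma pathRel_refl (p : Paths f) : PathRel f p p := ⟨0, 0, fun _ => rfl⟩

lemma pathRel_symm {p q : Paths f} (h : PathRel f p q) : PathRel f q p := by
  obtain ⟨a, b, h⟩ := h
  exact ⟨b, a, fun i => (h i).symm⟩

lemma pathRel_trans {p q r : Paths f} (h1 : PathRel f p q) (h2 : PathRel f q r) :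
    PathRel f p r := by
  obtain ⟨a, b, h1⟩ := h1
  obtain ⟨c, d, h2⟩ := h2
  rcases le_or_gt b c with h | h
  · refine ⟨a + (c - b), d, fun i => ?_⟩
    have := h1 (c - b + i)
    have hb : b + (c - b + i) = c + i := by omega
    rw [hb] at this
    rw [show a + (c - b) + i = a + (c - b + i) by omega, this, h2]
  · refine ⟨a, d + (b - c), fun i => ?_⟩
    have := h2 (b - c + i)
    have hc : c + (b - c + i) = b + i := by omega
    rw [hc] at this
    rw [show d + (b - c) + i = d + (b - c + i) by omega, ← this, h1]

def pathSetoid : Setoid (Paths f) :=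
  ⟨PathRel f, pathRel_refl f, pathRel_symm f, pathRel_trans f⟩

/-- The space of path classes. -/
def PathClasses := Quotient (pathSetoid f)

section Sec

variable (s : V → V)

/-- The set of "extra" vertices relative to the section `s`. -/
def Eset : Set V := {v | v ≠ s (f v)}

variable (hs : ∀ v, f (s v) = v)
variable (hgood : ∀ v k, 0 < k → f^[k] v = v → s v = f^[k - 1] v)

section
include hs

lemma s_inj : Function.Injective s := by
  intro a b h
  have := congrArg f h
  rwa [hs, hs] at this

lemma s_notMem_Eset (v : V) : s v ∉ Eset f s := by
  simp only [Eset, Set.mem_setOf_eq, not_not, hs]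

end

section
include hs hgood

lemma not_per_of_mem_Eset {v : V} (hv : v ∈ Eset f s) (k : ℕ) (hk : 0 < k) :
    f^[k] v ≠ v := by
  intro hkv
  apply hv
  have h1 : f^[k] (f v) = f v := by
    rw [← Function.iterate_succ_apply, Function.iterate_succ_apply', hkv]
  have := hgood (f v) k hk h1
  rw [this, ← Function.iterate_succ_apply, show (k-1).succ = k by omega, hkv]

end

/-- Extra times of a path. -/
def XT (p : ℕ → V) : Set ℤ := {t | pbar f p (t + 1) ∈ Eset f s}

section
include hs hgood

lemma xt_injOn {p : ℕ → V} (hp : IsPath f p) :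
    Set.InjOn (fun t => pbar f p (t + 1)) (XT f s p) := by
  have key : ∀ t t' : ℤ, t ∈ XT f s p → t < t' →
      pbar f p (t + 1) = pbar f p (t' + 1) → False := by
    intro t t' ht hlt h
    have hdet : pbar f p (t + 1) = f^[(t' - t).toNat] (pbar f p ((t + 1) + (t' - t).toNat)) :=
      pbar_det f hp _ _
    have he : (t + 1) + ((t' - t).toNat : ℤ) = t' + 1 := by omega
    rw [he] at hdet
    rw [← h] at hdet
    exact not_per_of_mem_Eset f s hs hgood ht ((t' - t).toNat) (by omega) hdet.symm
  intro t ht t' ht' h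
  simp only at h
  by_contra hne
  rcases lt_or_gt_of_ne hne with hlt | hlt
  · exact key t t' ht hlt h
  · exact key t' t ht' hlt h.symm

lemma xt_finite (hE : (Eset f s).Finite) {p : ℕ → V} (hp : IsPath f p) :
    (XT f s p).Finite := by
  apply Set.Finite.of_finite_image _ (xt_injOn f s hs hgood hp)
  apply hE.subset
  rintro v ⟨t, ht, rfl⟩
  exact ht

omit hgood in
lemma pbar_eq_s_iterate {p : ℕ → V} (hp : IsPath f p) {T : ℤ}
    (hT : ∀ t : ℤ, T ≤ t → t ∉ XT f s p) (j : ℕ) :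
    pbar f p (T + j) = s^[j] (pbar f p T) := by
  induction j with
  | zero => simp
  | succ j ih =>
    have hmem : T + j ∉ XT f s p := hT _ (by omega)
    simp only [XT, Set.mem_setOf_eq, Eset, not_not] at hmem
    rw [show (T + (↑(j+1)) : ℤ) = (T + j) + 1 by push_cast; ring]
    rw [Function.iterate_succ_apply', ← ih, hmem]
    congr 1
    exact pbar_step f hp _

end

/-- The backward `s`-path from a vertex. -/
def sPath (v : V) (hs : ∀ v, f (s v) = v) : Paths f :=
  ⟨fun n => s^[n] v, by
    intro n
    show f (s^[n+1] v) = s^[n] v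
    rw [Function.iterate_succ_apply', hs]⟩

lemma pbar_sPath (v : V) (hs : ∀ v, f (s v) = v) (t : ℤ) :
    pbar f (sPath f s v hs).1 t = if 0 ≤ t then s^[t.toNat] v else f^[(-t).toNat] v := by
  simp [pbar, sPath]

include hs in
lemma phi_injective :
    Function.Injective
      (fun e : ↥(Eset f s) => (Quotient.mk (pathSetoid f) (sPath f s e.1 hs))) := by
  rintro ⟨e, he⟩ ⟨e', he'⟩ h
  simp only [Quotient.eq] at h
  obtain ⟨a, b, hab⟩ := h
  have h0 := hab 0
  simp only [sPath, add_zero] at h0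
  have key : ∀ (a b : ℕ) (x y : V), y ∈ Eset f s → s^[a] x = s^[b] y → b ≤ a → x ∈ Eset f s →
      x = y := by
    intro a b x y hy hxy hba hx
    have : s^[b] (s^[a - b] x) = s^[b] y := by
      rw [← Function.iterate_add_apply, show b + (a - b) = a by omega, hxy]
    have h2 : s^[a - b] x = y := (s_inj f s hs).iterate b this
    rcases Nat.eq_zero_or_pos (a - b) with h3 | h3
    · rw [h3] at h2; simpa using h2
    · exfalso
      rw [show a - b = (a - b - 1) + 1 by omega, Function.iterate_succ_apply'] at h2
      rw [← h2] at hy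
      exact s_notMem_Eset f s hs _ hy
  rcases le_or_gt b a with hba | hba
  · exact Subtype.ext (key a b e e' he' h0 hba he)
  · exact Subtype.ext (key b a e' e he h0.symm (by omega) he').symm

section Psi

variable (hE : (Eset f s).Finite)

include hs hgood hE in
lemma xt_fin (p : Paths f) : (XT f s p.1).Finite := xt_finite f s hs hgood hE p.2

/-- The invariant of a path class: the extra vertex at the last extra time. -/
def PsiAux (p : Paths f) : Option ↥(Eset f s) :=
  if h : (XT f s p.1).Nonempty then
    some ⟨pbar f p.1 (((xt_fin f s hs hgood hE p).toFinset.max'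
      (by rwa [Set.Finite.toFinset_nonempty])) + 1),
      by
        have := ((xt_fin f s hs hgood hE p).toFinset.max'_mem
          (by rwa [Set.Finite.toFinset_nonempty]))
        rw [Set.Finite.mem_toFinset] at this
        exact this⟩
  else none

include hs hgood hE in
lemma psiAux_respects (p q : Paths f) (h : PathRel f p q) :
    PsiAux f s hs hgood hE p = PsiAux f s hs hgood hE q := by
  obtain ⟨a, b, hab⟩ := h
  have hshift : ∀ t : ℤ, pbar f p.1 (a + t) = pbar f q.1 (b + t) :=
    pbar_shift f p.2 q.2 a b hab
  have hmemiff : ∀ t : ℤ, t ∈ XT f s q.1 ↔ (a : ℤ) - b + t ∈ XT f s p.1 := by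
    intro t
    simp only [XT, Set.mem_setOf_eq]
    have := hshift (t + 1 - b)
    rw [show (a:ℤ) + (t + 1 - b) = ((a:ℤ) - b + t) + 1 by ring,
        show (b:ℤ) + (t + 1 - b) = t + 1 by ring] at this
    rw [this]
  by_cases hq : (XT f s q.1).Nonempty
  · have hp : (XT f s p.1).Nonempty := by
      obtain ⟨t, ht⟩ := hq
      exact ⟨_, (hmemiff t).1 ht⟩
    rw [PsiAux, PsiAux, dif_pos hp, dif_pos hq]
    have hmax : ((xt_fin f s hs hgood hE p).toFinset.max'
        (by rwa [Set.Finite.toFinset_nonempty]))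
        = (a : ℤ) - b + ((xt_fin f s hs hgood hE q).toFinset.max'
        (by rwa [Set.Finite.toFinset_nonempty])) := by
      apply le_antisymm
      · apply Finset.max'_le
        intro t ht
        rw [Set.Finite.mem_toFinset] at ht
        have ht' : t - ((a:ℤ) - b) ∈ XT f s q.1 := by
          rw [hmemiff]
          rwa [show (a:ℤ) - b + (t - ((a:ℤ)-b)) = t by ring]
        have := Finset.le_max' ((xt_fin f s hs hgood hE q).toFinset) (t - ((a:ℤ) - b))
          (by rw [Set.Finite.mem_toFinset]; exact ht')
        omega
      · have hm := (xt_fin f s hs hgood hE q).toFinset.max'_mem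
          (by rwa [Set.Finite.toFinset_nonempty])
        rw [Set.Finite.mem_toFinset] at hm
        apply Finset.le_max'
        rw [Set.Finite.mem_toFinset]
        exact (hmemiff _).1 hm
    congr 1
    apply Subtype.ext
    simp only
    rw [hmax]
    have := hshift (((xt_fin f s hs hgood hE q).toFinset.max'
        (by rwa [Set.Finite.toFinset_nonempty])) + 1 - b)
    rw [show (a:ℤ) + (((xt_fin f s hs hgood hE q).toFinset.max'
        (by rwa [Set.Finite.toFinset_nonempty])) + 1 - b)
        = ((a:ℤ) - b + ((xt_fin f s hs hgood hE q).toFinset.max'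
        (by rwa [Set.Finite.toFinset_nonempty]))) + 1 by ring] at this
    rw [this]
    congr 1
    omega
  · have hp : ¬ (XT f s p.1).Nonempty := by
      intro ⟨t, ht⟩
      apply hq
      refine ⟨t - ((a:ℤ) - b), ?_⟩
      rw [hmemiff, show (a:ℤ) - b + (t - ((a:ℤ)-b)) = t by ring]
      exact ht
    rw [PsiAux, PsiAux, dif_neg hp, dif_neg hq]

/-- The classifying map on path classes. -/
def Psi : PathClasses f → Option ↥(Eset f s) :=
  Quotient.lift (PsiAux f s hs hgood hE) (psiAux_respects f s hs hgood hE)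

lemma pbar_negNat (p : ℕ → V) (n : ℕ) : pbar f p (-(n:ℤ)) = f^[n] (p 0) := by
  rcases Nat.eq_zero_or_pos n with h | h
  · subst h; simp [pbar]
  · have : ¬ (0:ℤ) ≤ -(n:ℤ) := by omega
    simp only [pbar, if_neg this]
    congr 1
    omega

include hs hgood hE in
lemma psi_injective (hconf : ∀ u v : V, ∃ n m : ℕ, f^[n] u = f^[m] v) :
    Function.Injective (Psi f s hs hgood hE) := by
  intro x y
  induction x using Quotient.inductionOn with | h p =>
  induction y using Quotient.inductionOn with | h q =>
  intro hpq
  have hpq' : PsiAux f s hs hgood hE p = PsiAux f s hs hgood hE q := hpq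
  apply Quotient.sound
  by_cases hp : (XT f s p.1).Nonempty <;> by_cases hq : (XT f s q.1).Nonempty
  · -- both have extra times
    rw [PsiAux, PsiAux, dif_pos hp, dif_pos hq] at hpq'
    set Tp := ((xt_fin f s hs hgood hE p).toFinset.max'
      (by rwa [Set.Finite.toFinset_nonempty])) with hTp
    set Tq := ((xt_fin f s hs hgood hE q).toFinset.max'
      (by rwa [Set.Finite.toFinset_nonempty])) with hTq
    have he : pbar f p.1 (Tp + 1) = pbar f q.1 (Tq + 1) := by
      have := Option.some.inj hpq'
      exact congrArg Subtype.val this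
    have hpl : ∀ t : ℤ, Tp + 1 ≤ t → t ∉ XT f s p.1 := by
      intro t ht hmem
      have := Finset.le_max' ((xt_fin f s hs hgood hE p).toFinset) t
        (by rw [Set.Finite.mem_toFinset]; exact hmem)
      omega
    have hql : ∀ t : ℤ, Tq + 1 ≤ t → t ∉ XT f s q.1 := by
      intro t ht hmem
      have := Finset.le_max' ((xt_fin f s hs hgood hE q).toFinset) t
        (by rw [Set.Finite.mem_toFinset]; exact hmem)
      omega
    have hip := pbar_eq_s_iterate f s hs p.2 hpl
    have hiq := pbar_eq_s_iterate f s hs q.2 hql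
    set j₀ : ℕ := (max 0 (max (-(Tp+1)) (-(Tq+1)))).toNat with hj₀
    refine ⟨(Tp + 1 + j₀).toNat, (Tq + 1 + j₀).toNat, fun i => ?_⟩
    have e1 : p.1 ((Tp + 1 + j₀).toNat + i) = pbar f p.1 ((Tp + 1) + ((j₀ + i : ℕ) : ℤ)) := by
      rw [show (Tp + 1) + ((j₀ + i : ℕ) : ℤ) = (((Tp + 1 + j₀).toNat + i : ℕ) : ℤ) by
        push_cast; omega]
      rw [pbar_natCast]
    have e2 : q.1 ((Tq + 1 + j₀).toNat + i) = pbar f q.1 ((Tq + 1) + ((j₀ + i : ℕ) : ℤ)) := by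
      rw [show (Tq + 1) + ((j₀ + i : ℕ) : ℤ) = (((Tq + 1 + j₀).toNat + i : ℕ) : ℤ) by
        push_cast; omega]
      rw [pbar_natCast]
    rw [e1, e2, hip, hiq, he]
  · rw [PsiAux, PsiAux, dif_pos hp, dif_neg hq] at hpq'; exact absurd hpq' (by simp)
  · rw [PsiAux, PsiAux, dif_neg hp, dif_pos hq] at hpq'; exact absurd hpq' (by simp)
  · -- both extra-free
    obtain ⟨n, m, hnm⟩ := hconf (p.1 0) (q.1 0)
    have hpl : ∀ t : ℤ, -(n:ℤ) ≤ t → t ∉ XT f s p.1 := fun t _ ht => hp ⟨t, ht⟩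
    have hql : ∀ t : ℤ, -(m:ℤ) ≤ t → t ∉ XT f s q.1 := fun t _ ht => hq ⟨t, ht⟩
    have hip := pbar_eq_s_iterate f s hs p.2 hpl
    have hiq := pbar_eq_s_iterate f s hs q.2 hql
    refine ⟨m, n, fun i => ?_⟩
    have e1 : p.1 (m + i) = pbar f p.1 (-(n:ℤ) + ((n + m + i : ℕ) : ℤ)) := by
      rw [show (-(n:ℤ) + ((n + m + i : ℕ) : ℤ)) = ((m + i : ℕ) : ℤ) by push_cast; omega]
      rw [pbar_natCast]
    have e2 : q.1 (n + i) = pbar f q.1 (-(m:ℤ) + ((m + n + i : ℕ) : ℤ)) := by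
      rw [show (-(m:ℤ) + ((m + n + i : ℕ) : ℤ)) = ((n + i : ℕ) : ℤ) by push_cast; omega]
      rw [pbar_natCast]
    rw [e1, e2, hip, hiq, pbar_negNat, pbar_negNat, hnm, show n + m + i = m + n + i by omega]

include hs hgood hE in
lemma psi_surjective [Nonempty V] : Function.Surjective (Psi f s hs hgood hE) := by
  rintro (_ | ⟨e, he⟩)
  · -- none: find a vertex whose forward orbit avoids `Eset`
    set v₀ : V := Classical.arbitrary V
    have hKfin : {k : ℕ | f^[k] v₀ ∈ Eset f s}.Finite := by
      apply Set.Finite.of_finite_image (f := fun k => f^[k] v₀)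
      · apply hE.subset
        rintro v ⟨k, hk, rfl⟩
        exact hk
      · intro k hk j hj hkj
        simp only at hkj
        by_contra hne
        have key : ∀ k j : ℕ, f^[k] v₀ ∈ Eset f s → k < j → f^[k] v₀ = f^[j] v₀ → False := by
          intro k j hk hlt hkj
          have : f^[j - k] (f^[k] v₀) = f^[k] v₀ := by
            rw [← Function.iterate_add_apply, show j - k + k = j by omega, ← hkj]
          exact not_per_of_mem_Eset f s hs hgood hk (j - k) (by omega) this
        rcases lt_or_gt_of_ne hne with h | h
        · exact key k j hk h hkj
        · exact key j k hj h hkj.symm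
    obtain ⟨b, hb⟩ := hKfin.bddAbove
    set w := f^[b + 1] v₀ with hw
    have hwnot : ∀ j : ℕ, f^[j] w ∉ Eset f s := by
      intro j hj
      rw [hw, ← Function.iterate_add_apply] at hj
      have : j + (b + 1) ∈ {k : ℕ | f^[k] v₀ ∈ Eset f s} := hj
      have := hb this
      omega
    refine ⟨Quotient.mk _ (sPath f s w hs), ?_⟩
    show PsiAux f s hs hgood hE (sPath f s w hs) = _
    have hempty : ¬ (XT f s (sPath f s w hs).1).Nonempty := by
      rintro ⟨t, ht⟩
      rw [XT, Set.mem_setOf_eq, pbar_sPath] at ht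
      split_ifs at ht with h0
      · rcases Nat.eq_zero_or_pos (t+1).toNat with h1 | h1
        · rw [h1] at ht
          exact hwnot 0 ht
        · rw [show (t+1).toNat = ((t+1).toNat - 1) + 1 by omega,
            Function.iterate_succ_apply'] at ht
          exact s_notMem_Eset f s hs _ ht
      · exact hwnot _ ht
    rw [PsiAux, dif_neg hempty]
  · -- some e
    refine ⟨Quotient.mk _ (sPath f s e hs), ?_⟩
    show PsiAux f s hs hgood hE (sPath f s e hs) = _
    have hmem : pbar f (sPath f s e hs).1 (-1 + 1) ∈ Eset f s := by
      rw [show (-1 + 1 : ℤ) = ((0:ℕ):ℤ) by ring, pbar_natCast]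
      simpa [sPath] using he
    have hne : (XT f s (sPath f s e hs).1).Nonempty := ⟨-1, hmem⟩
    rw [PsiAux, dif_pos hne]
    have hmax : ((xt_fin f s hs hgood hE (sPath f s e hs)).toFinset.max'
        (by rwa [Set.Finite.toFinset_nonempty])) = -1 := by
      apply le_antisymm
      · apply Finset.max'_le
        intro t ht
        rw [Set.Finite.mem_toFinset] at ht
        by_contra hlt
        have h0 : (0:ℤ) ≤ t + 1 := by omega
        rw [XT, Set.mem_setOf_eq, pbar_sPath, if_pos h0] at ht
        rw [show (t+1).toNat = (t.toNat) + 1 by omega, Function.iterate_succ_apply'] at ht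
        exact s_notMem_Eset f s hs _ ht
      · exact Finset.le_max' _ _ (by rw [Set.Finite.mem_toFinset]; exact hmem)
    congr 1
    apply Subtype.ext
    simp only [hmax]
    rw [show (-1 + 1 : ℤ) = ((0:ℕ):ℤ) by ring, pbar_natCast]
    simp [sPath]

end Psi

/-- Existence of a "good" section for a surjective map. -/
lemma exists_good_section (hsurj : Function.Surjective f) :
    ∃ s : V → V, (∀ v, f (s v) = v) ∧
      (∀ v k, 0 < k → f^[k] v = v → s v = f^[k - 1] v) := by
  have hmin : ∀ (v : V) (k₀ : ℕ), 0 < k₀ → f^[k₀] v = v →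
      (∀ j, 0 < j → f^[j] v = v → k₀ ≤ j) →
      ∀ (k : ℕ), 0 < k → f^[k] v = v → f^[k - 1] v = f^[k₀ - 1] v := by
    intro v k₀ hk₀ hk₀v hmn k
    induction k using Nat.strong_induction_on with | _ k ih =>
    intro hk hkv
    rcases le_or_gt k k₀ with h | h
    · have h2 : k₀ ≤ k := hmn k hk hkv
      have h3 : k = k₀ := by omega
      subst h3; rfl
    · have hk' : f^[k - k₀] v = v := by
        have h4 : f^[k - k₀] (f^[k₀] v) = f^[k] v := by
          rw [← Function.iterate_add_apply, show k - k₀ + k₀ = k by omega]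
        rw [hk₀v] at h4
        rw [h4, hkv]
      have ihk := ih (k - k₀) (by omega) (by omega) hk'
      have h5 : f^[k - 1] v = f^[(k - k₀ - 1) + k₀] v := by congr 1; omega
      rw [h5, Function.iterate_add_apply, hk₀v, ihk]
  refine ⟨fun v => if h : ∃ k, 0 < k ∧ f^[k] v = v then f^[Nat.find h - 1] v
    else (hsurj v).choose, fun v => ?_, fun v k hk hkv => ?_⟩
  · by_cases h : ∃ k, 0 < k ∧ f^[k] v = v
    · simp only [dif_pos h]
      obtain ⟨hpos, hper⟩ := Nat.find_spec h
      rw [show Nat.find h = (Nat.find h - 1) + 1 by omega, Function.iterate_succ_apply'] at hper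
      exact hper
    · simp only [dif_neg h]
      exact (hsurj v).choose_spec
  · have h : ∃ k, 0 < k ∧ f^[k] v = v := ⟨k, hk, hkv⟩
    simp only [dif_pos h]
    obtain ⟨hpos, hper⟩ := Nat.find_spec h
    exact (hmin v (Nat.find h) hpos hper
      (fun j hj hjv => Nat.find_le ⟨hj, hjv⟩) k hk hkv).symm

/-- Main abstract counting result. -/
theorem card_pathClasses [Nonempty V] (s : V → V) (hs' : ∀ v, f (s v) = v)
    (hgood' : ∀ v k, 0 < k → f^[k] v = v → s v = f^[k - 1] v)
    (hconf : ∀ u v : V, ∃ n m : ℕ, f^[n] u = f^[m] v) :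
    ENat.card (PathClasses f) = ENat.card ↥(Eset f s) + 1 := by
  by_cases hE : (Eset f s).Finite
  · have hbij : Function.Bijective (Psi f s hs' hgood' hE) :=
      ⟨psi_injective f s hs' hgood' hE hconf, psi_surjective f s hs' hgood' hE⟩
    have hfinE : Finite ↥(Eset f s) := hE.to_subtype
    have : Fintype ↥(Eset f s) := Fintype.ofFinite _
    have e := Equiv.ofBijective _ hbij
    have : Fintype (PathClasses f) := Fintype.ofEquiv _ e.symm
    rw [ENat.card_eq_coe_fintype_card, ENat.card_eq_coe_fintype_card,
      Fintype.card_congr e, Fintype.card_option]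
    push_cast
    rfl
  · have h1 : Infinite ↥(Eset f s) := Set.infinite_coe_iff.2 hE
    have h2 : Infinite (PathClasses f) :=
      Infinite.of_injective _ (phi_injective f s hs')
    rw [ENat.card_eq_top_of_infinite, ENat.card_eq_top_of_infinite]
    rfl


end Sec

section Concrete

variable {A : Type*}

lemma asympEq_refl (x : ℤ → A) : AsympEq x x := ⟨0, 0, fun _ => rfl⟩

lemma asympEq_symm {x y : ℤ → A} (h : AsympEq x y) : AsympEq y x := by
  obtain ⟨n, m, h⟩ := h
  exact ⟨m, n, fun i => (h i).symm⟩

lemma asympEq_trans {x y z : ℤ → A} (h1 : AsympEq x y) (h2 : AsympEq y z) : AsympEq x z := by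
  obtain ⟨n, m, h1⟩ := h1
  obtain ⟨m', k, h2⟩ := h2
  rcases le_or_gt m m' with h | h
  · refine ⟨n + (m' - m), k, fun i => ?_⟩
    have e1 := h1 ((m' - m).toNat + i)
    have e2 := h2 i
    rw [show (n:ℤ) + ((m' - m).toNat + i : ℕ) = n + (m' - m) + i by push_cast; omega,
      show (m:ℤ) + ((m' - m).toNat + i : ℕ) = m' + i by push_cast; omega] at e1
    rw [e1, e2]
  · refine ⟨n, k + (m - m'), fun i => ?_⟩
    have e1 := h1 i
    have e2 := h2 ((m - m').toNat + i)
    rw [show (m':ℤ) + ((m - m').toNat + i : ℕ) = m + i by push_cast; omega,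
      show (k:ℤ) + ((m - m').toNat + i : ℕ) = k + (m - m') + i by push_cast; omega] at e2
    rw [e1, ← e2]

section Shift
variable [TopologicalSpace A]
variable {X C : Set (ℤ → A)} (hX : IsShiftZ X) (hC : IsAsympClass X C)

include hX hC

lemma C_subset_X : C ⊆ X := by
  obtain ⟨x₀, hx₀, rfl⟩ := hC
  exact fun y hy => hy.1

lemma C_nonempty : C.Nonempty := by
  obtain ⟨x₀, hx₀, rfl⟩ := hC
  exact ⟨x₀, hx₀, asympEq_refl x₀⟩

lemma mem_C_of_asymp {x y : ℤ → A} (hx : x ∈ C) (hy : y ∈ X) (hxy : AsympEq x y) : y ∈ C := by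
  obtain ⟨x₀, hx₀, rfl⟩ := hC
  exact ⟨hy, asympEq_trans hx.2 hxy⟩

lemma asymp_of_mem_C {x y : ℤ → A} (hx : x ∈ C) (hy : y ∈ C) : AsympEq x y := by
  obtain ⟨x₀, hx₀, rfl⟩ := hC
  exact asympEq_trans (asympEq_symm hx.2) hy.2

lemma shiftZ_mem_C {x : ℤ → A} (hx : x ∈ C) : shiftZ x ∈ C := by
  have hxX : x ∈ X := C_subset_X hX hC hx
  have h1 : shiftZ x ∈ X := by
    rw [← hX.2]; exact ⟨x, hxX, rfl⟩
  refine mem_C_of_asymp hX hC hx h1 ⟨1, 0, fun i => ?_⟩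
  show x (1 + i) = x ((0:ℤ) + i + 1)
  congr 1; ring

lemma shiftBack_mem_C {x : ℤ → A} (hx : x ∈ C) : (fun k => x (k - 1)) ∈ C := by
  have hxX : x ∈ X := C_subset_X hX hC hx
  have h1 : x ∈ shiftZ '' X := by rw [hX.2]; exact hxX
  obtain ⟨y, hyX, hyx⟩ := h1
  have hyeq : y = fun k => x (k - 1) := by
    funext k
    have := congrFun hyx (k - 1)
    show y k = x (k-1)
    rw [← this, shiftZ]
    congr 1; ring
  rw [← hyeq]
  refine mem_C_of_asymp hX hC hx hyX ⟨0, 1, fun i => ?_⟩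
  have := congrFun hyx ((0:ℤ) + i)
  rw [← this, shiftZ]
  congr 1; ring

lemma shiftBackN_mem_C {x : ℤ → A} (hx : x ∈ C) (n : ℕ) : (fun k => x (k - (n:ℤ))) ∈ C := by
  induction n with
  | zero => simpa using hx
  | succ n ih =>
    have := shiftBack_mem_C hX hC ih
    convert this using 2 with k
    congr 1
    push_cast
    ring

end Shift

lemma consSeq_shiftN (u : ℕ → A) : consSeq (u 0) (shiftN u) = u := by
  funext i
  cases i with
  | zero => rfl
  | succ j => show u (j + 1) = u (j + 1); rfl

lemma shiftN_consSeq (a : A) (u : ℕ → A) : shiftN (consSeq a u) = u := rfl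

lemma plusSeq_shiftZ (x : ℤ → A) : plusSeq (shiftZ x) = shiftN (plusSeq x) := by
  funext i
  show x (((i:ℕ):ℤ) + 1) = x (((i+1 : ℕ) : ℕ):ℤ)
  congr 1


lemma shiftN_iter (u : ℕ → A) (n : ℕ) : shiftN^[n] u = fun i => u (i + n) := by
  induction n with
  | zero => simp
  | succ n ih =>
    rw [Function.iterate_succ_apply', ih]
    funext i
    show u ((i+1) + n) = u (i + (n+1))
    congr 1; omega

lemma orbitZ_eq_of_mem {x y : ℤ → A} (h : x ∈ orbitZ y) : orbitZ x = orbitZ y := by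
  obtain ⟨n, hn⟩ := h
  ext z
  constructor
  · rintro ⟨m, hm⟩
    exact ⟨m + n, fun i => by rw [hm i, hn (i + m)]; congr 1; ring⟩
  · rintro ⟨m, hm⟩
    refine ⟨m - n, fun i => ?_⟩
    have h2 := hn (i + (m - n))
    rw [show i + (m - n) + n = i + m by ring] at h2
    rw [hm i, ← h2]

end Concrete

section VsetSec

variable {A : Type*} [TopologicalSpace A]

/-- The set of one-sided sequences arising from `C`. -/
def Vset (C : Set (ℤ → A)) : Set (ℕ → A) := {u | ∃ x ∈ C, plusSeq x = u}

variable {X C : Set (ℤ → A)} (hX : IsShiftZ X) (hC : IsAsympClass X C)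

include hX hC

lemma shiftN_mem_Vset {u : ℕ → A} (hu : u ∈ Vset C) : shiftN u ∈ Vset C := by
  obtain ⟨x, hx, rfl⟩ := hu
  exact ⟨shiftZ x, shiftZ_mem_C hX hC hx, plusSeq_shiftZ x⟩

lemma exists_preimage_Vset {u : ℕ → A} (hu : u ∈ Vset C) :
    ∃ v ∈ Vset C, shiftN v = u := by
  obtain ⟨x, hx, rfl⟩ := hu
  refine ⟨plusSeq (fun k => x (k - 1)), ⟨_, shiftBack_mem_C hX hC hx, rfl⟩, ?_⟩
  funext i
  show x ((((i + 1 : ℕ)):ℤ) - 1) = x (i:ℤ)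
  congr 1
  push_cast
  ring

lemma vset_nonempty : (Vset C).Nonempty := by
  obtain ⟨x, hx⟩ := C_nonempty hX hC
  exact ⟨plusSeq x, x, hx, rfl⟩

lemma vset_confluent {u v : ℕ → A} (hu : u ∈ Vset C) (hv : v ∈ Vset C) :
    ∃ n m : ℕ, shiftN^[n] u = shiftN^[m] v := by
  obtain ⟨x, hx, rfl⟩ := hu
  obtain ⟨y, hy, rfl⟩ := hv
  obtain ⟨n, m, h⟩ := asymp_of_mem_C hX hC hx hy
  set t : ℕ := (max (-n) (-m)).toNat with ht
  refine ⟨(n + t).toNat, (m + t).toNat, ?_⟩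
  rw [shiftN_iter, shiftN_iter]
  funext i
  show x ((i + (n+t).toNat : ℕ) : ℤ) = y ((i + (m+t).toNat : ℕ) : ℤ)
  have := h (t + i)
  rw [show (n:ℤ) + ((t + i : ℕ):ℤ) = ((i + (n+t).toNat : ℕ) : ℤ) by push_cast; omega,
    show (m:ℤ) + ((t + i : ℕ):ℤ) = ((i + (m+t).toNat : ℕ) : ℤ) by push_cast; omega] at this
  exact this

/-- The shift as a self-map of `Vset C`. -/
def fV : ↥(Vset C) → ↥(Vset C) := fun u => ⟨shiftN u.1, shiftN_mem_Vset hX hC u.2⟩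

lemma fV_surjective : Function.Surjective (fV hX hC) := by
  rintro ⟨u, hu⟩
  obtain ⟨v, hv, hvu⟩ := exists_preimage_Vset hX hC hu
  exact ⟨⟨v, hv⟩, Subtype.ext hvu⟩

lemma fV_iter (n : ℕ) (u : ↥(Vset C)) : ((fV hX hC)^[n] u).1 = shiftN^[n] u.1 := by
  induction n with
  | zero => rfl
  | succ n ih =>
    rw [Function.iterate_succ_apply', Function.iterate_succ_apply']
    show shiftN (((fV hX hC)^[n] u).1) = _
    rw [ih]

lemma fV_confluent (u v : ↥(Vset C)) :
    ∃ n m : ℕ, (fV hX hC)^[n] u = (fV hX hC)^[m] v := by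
  obtain ⟨n, m, h⟩ := vset_confluent hX hC u.2 v.2
  exact ⟨n, m, Subtype.ext (by rw [fV_iter, fV_iter, h])⟩

end VsetSec

section PathsOrbits

variable {A : Type*} [TopologicalSpace A] [DiscreteTopology A]
variable {X C : Set (ℤ → A)} (hX : IsShiftZ X) (hC : IsAsympClass X C)

lemma mem_orbitZ_self (x : ℤ → A) : x ∈ orbitZ x :=
  ⟨0, fun i => by rw [add_zero]⟩

/-- The backward path of one-sided sequences associated to a two-sided point. -/
def pathOfFun (x : ℤ → A) : ℕ → ℕ → A := fun n i => x ((i:ℤ) - n)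

include hX hC in
lemma pathOfFun_mem {x : ℤ → A} (hx : x ∈ C) (n : ℕ) : pathOfFun x n ∈ Vset C :=
  ⟨fun k => x (k - n), shiftBackN_mem_C hX hC hx n, rfl⟩

/-- The backward path in `Vset C` associated to a point of `C`. -/
def pathOf {x : ℤ → A} (hx : x ∈ C) : Paths (fV hX hC) :=
  ⟨fun n => ⟨pathOfFun x n, pathOfFun_mem hX hC hx n⟩, by
    intro n
    apply Subtype.ext
    funext i
    show x ((((i+1 : ℕ)):ℤ) - ((n+1 : ℕ):ℤ)) = x ((i:ℤ) - (n:ℤ))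
    congr 1
    push_cast
    ring⟩

include hX hC in
lemma pathRel_of_orbit {x y : ℤ → A} (hx : x ∈ C) (hy : y ∈ C) (h : x ∈ orbitZ y) :
    PathRel (fV hX hC) (pathOf hX hC hx) (pathOf hX hC hy) := by
  obtain ⟨n, hn⟩ := h
  set a : ℕ := n.toNat with ha
  set b : ℕ := ((a:ℤ) - n).toNat with hb
  have hab : (b:ℤ) = (a:ℤ) - n := by omega
  refine ⟨a, b, fun i' => ?_⟩
  apply Subtype.ext
  funext i
  show x ((i:ℤ) - ((a + i' : ℕ):ℤ)) = y ((i:ℤ) - ((b + i' : ℕ):ℤ))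
  rw [hn ((i:ℤ) - ((a + i' : ℕ):ℤ))]
  congr 1
  push_cast
  omega

include hX hC in
lemma orbit_eq_of_pathRel {x y : ℤ → A} (hx : x ∈ C) (hy : y ∈ C)
    (h : PathRel (fV hX hC) (pathOf hX hC hx) (pathOf hX hC hy)) :
    orbitZ x = orbitZ y := by
  obtain ⟨a, b, hab⟩ := h
  apply orbitZ_eq_of_mem
  refine ⟨(a:ℤ) - b, fun k => ?_⟩
  set i' : ℕ := (-(k + a)).toNat with hi'
  set i : ℕ := (k + a + i').toNat with hi
  have h1 : (i:ℤ) = k + a + i' := by omega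
  have h2 := congrFun (congrArg Subtype.val (hab i')) i
  show x k = y (k + ((a:ℤ) - b))
  have e1 : x ((i:ℤ) - ((a + i' : ℕ):ℤ)) = y ((i:ℤ) - ((b + i' : ℕ):ℤ)) := h2
  rw [show (i:ℤ) - ((a + i' : ℕ):ℤ) = k by push_cast; omega,
    show (i:ℤ) - ((b + i' : ℕ):ℤ) = k + ((a:ℤ) - b) by push_cast; omega] at e1
  exact e1

/-- Reconstruction of a two-sided point from a backward path. -/
def xOfFun (p : ℕ → ℕ → A) : ℤ → A :=
  fun k => p ((-k).toNat) ((k + ((-k).toNat : ℕ)).toNat)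

section xOf

variable {p : ℕ → ℕ → A} (hp : ∀ n, shiftN (p (n+1)) = p n)

include hp

lemma path_consis : ∀ (n m : ℕ), n ≤ m → ∀ k : ℤ, 0 ≤ k + n →
    p n ((k + n).toNat) = p m ((k + m).toNat) := by
  intro n m
  induction m with
  | zero =>
    intro hnm k _
    interval_cases n
    rfl
  | succ m ih =>
    intro hnm k hk
    rcases eq_or_lt_of_le hnm with h | h
    · subst h; rfl
    · have hnm' : n ≤ m := by omega
      rw [ih hnm' k hk]
      have h2 := congrFun (hp m) ((k + m).toNat)
      rw [shiftN] at h2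
      rw [← h2]
      congr 1
      omega

lemma xOf_eq (n : ℕ) (k : ℤ) (h : 0 ≤ k + n) :
    xOfFun p k = p n ((k + n).toNat) := by
  rw [xOfFun]
  rcases le_total ((-k).toNat) n with hle | hle
  · exact path_consis hp _ n hle k (by omega)
  · exact (path_consis hp n _ hle k h).symm

end xOf

section xOfC

variable {p : Paths (fV hX hC)}

include hX hC

lemma paths_step (p : Paths (fV hX hC)) (n : ℕ) :
    shiftN ((p.1 (n+1)).1) = (p.1 n).1 :=
  congrArg Subtype.val (p.2 n)

lemma shiftZn_mem_X {y : ℤ → A} (hy : y ∈ X) (n : ℕ) : (fun k => y (k + (n:ℤ))) ∈ X := by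
  induction n with
  | zero => simpa using hy
  | succ n ih =>
    have h1 : shiftZ (fun k => y (k + (n:ℤ))) ∈ X := by
      rw [← hX.2]; exact ⟨_, ih, rfl⟩
    convert h1 using 1
    funext k
    show y (k + ((n+1 : ℕ):ℤ)) = y (k + 1 + (n:ℤ))
    congr 1
    push_cast
    ring

lemma xOf_mem_C (p : Paths (fV hX hC)) : xOfFun (fun n => (p.1 n).1) ∈ C := by
  set pf : ℕ → ℕ → A := fun n => (p.1 n).1 with hpf
  have hp : ∀ n, shiftN (pf (n+1)) = pf n := paths_step hX hC p
  -- each p n comes from some element of C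
  have hyn : ∀ n : ℕ, ∃ y ∈ C, plusSeq y = pf n := fun n => (p.1 n).2
  choose y hyC hyp using hyn
  have hxX : xOfFun pf ∈ X := by
    refine hX.1.mem_of_tendsto (b := (Filter.atTop : Filter ℕ))
      (f := fun n : ℕ => (fun k => y n (k + (n:ℤ)))) ?_ ?_
    · rw [tendsto_pi_nhds]
      intro k
      have hev : ∀ᶠ n : ℕ in Filter.atTop, y n (k + (n:ℤ)) = xOfFun pf k := by
        rw [Filter.eventually_atTop]
        refine ⟨(-k).toNat, fun n hn => ?_⟩
        have h0 : 0 ≤ k + (n:ℤ) := by omega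
        have e1 : y n (k + (n:ℤ)) = plusSeq (y n) ((k + (n:ℤ)).toNat) := by
          show _ = y n (((k + (n:ℤ)).toNat : ℕ) : ℤ)
          congr 1
          omega
        rw [e1, hyp n, xOf_eq hp n k h0]
      exact tendsto_const_nhds.congr' (by filter_upwards [hev] with n h using h.symm)
    · exact Filter.Eventually.of_forall fun n =>
        shiftZn_mem_X hX hC (C_subset_X hX hC (hyC n)) n
  refine mem_C_of_asymp hX hC (hyC 0) hxX ⟨0, 0, fun i => ?_⟩
  have e1 : y 0 ((0:ℤ) + i) = plusSeq (y 0) i := by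
    show y 0 _ = y 0 _
    congr 1
    omega
  have e2 : xOfFun pf ((0:ℤ) + i) = pf 0 i := by
    rw [xOf_eq hp 0 ((0:ℤ) + i) (by omega)]
    congr 1
    omega
  rw [e1, e2]
  exact congrFun (hyp 0) i

lemma pathOf_xOf (p : Paths (fV hX hC)) :
    pathOf hX hC (xOf_mem_C hX hC p) = p := by
  set pf : ℕ → ℕ → A := fun n => (p.1 n).1 with hpf
  have hp : ∀ n, shiftN (pf (n+1)) = pf n := paths_step hX hC p
  apply Subtype.ext
  funext n
  apply Subtype.ext
  funext i
  show xOfFun pf ((i:ℤ) - n) = pf n i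
  rw [xOf_eq hp n ((i:ℤ) - n) (by omega)]
  congr 1
  omega

end xOfC

/-- The bijection between orbits contained in `C` and path classes. -/
noncomputable def orbitMap : ↥(orbitsIn C) → PathClasses (fV hX hC) := fun O =>
  Quotient.mk _ (pathOf hX hC (O.2.choose_spec.1))

include hX hC in
lemma orbitMap_bijective : Function.Bijective (orbitMap hX hC) := by
  constructor
  · intro O O' h
    have h1 := Quotient.exact h
    have h2 := orbit_eq_of_pathRel hX hC (O.2.choose_spec.1) (O'.2.choose_spec.1) h1
    apply Subtype.ext
    rw [O.2.choose_spec.2, O'.2.choose_spec.2, h2]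
  · intro c
    induction c using Quotient.inductionOn with | h p =>
    have hxC : xOfFun (fun n => (p.1 n).1) ∈ C := xOf_mem_C hX hC p
    set O : ↥(orbitsIn C) := ⟨orbitZ (xOfFun (fun n => (p.1 n).1)),
      ⟨_, hxC, rfl⟩⟩ with hO
    refine ⟨O, ?_⟩
    show Quotient.mk _ (pathOf hX hC (O.2.choose_spec.1)) = Quotient.mk _ p
    have hch : O.2.choose ∈ orbitZ (xOfFun (fun n => (p.1 n).1)) := by
      have h3 : orbitZ (xOfFun (fun n => (p.1 n).1)) = orbitZ O.2.choose :=
        O.2.choose_spec.2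
      rw [h3]
      exact mem_orbitZ_self _
    have h1 : PathRel (fV hX hC) (pathOf hX hC (O.2.choose_spec.1)) (pathOf hX hC hxC) :=
      pathRel_of_orbit hX hC (O.2.choose_spec.1) hxC hch
    have h2 := Quotient.sound (s := pathSetoid (fV hX hC)) h1
    rw [h2, pathOf_xOf]

end PathsOrbits

section EnatSums

lemma enat_hasSum {ι : Type*} (g : ι → ℕ∞) :
    HasSum g (⨆ s : Finset ι, ∑ i ∈ s, g i) :=
  tendsto_atTop_iSup (fun _ _ hst => Finset.sum_le_sum_of_subset hst)

lemma enat_tsum_eq_iSup {ι : Type*} (g : ι → ℕ∞) :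
    ∑' i, g i = ⨆ s : Finset ι, ∑ i ∈ s, g i :=
  (enat_hasSum g).tsum_eq

lemma enat_tsum_eq_top_of_infinite {ι : Type*} [Infinite ι] (g : ι → ℕ∞)
    (hg : ∀ i, 1 ≤ g i) : ∑' i, g i = ⊤ := by
  rw [enat_tsum_eq_iSup]
  by_contra h
  obtain ⟨m, hm⟩ := WithTop.ne_top_iff_exists.1 h
  obtain ⟨t, ht⟩ := Infinite.exists_subset_card_eq ι (m + 1)
  have h1 : ((m + 1 : ℕ) : ℕ∞) ≤ ∑ i ∈ t, g i := by
    have h2 := Finset.card_nsmul_le_sum t g 1 (fun i _ => hg i)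
    rw [nsmul_eq_mul, mul_one, ht] at h2
    exact_mod_cast h2
  have h3 : ∑ i ∈ t, g i ≤ ⨆ s : Finset ι, ∑ i ∈ s, g i :=
    le_iSup (fun s : Finset ι => ∑ i ∈ s, g i) t
  rw [← hm] at h3
  have h4 : ((m + 1 : ℕ) : ℕ∞) ≤ (m : ℕ∞) := h1.trans h3
  rw [Nat.cast_le] at h4
  omega

lemma enat_add_one_sub_one (x : ℕ∞) : x + 1 - 1 = x := by
  cases x using ENat.recTopCoe with
  | top => simp
  | coe n =>
    rw [show ((n:ℕ∞) + 1) = ((n + 1 : ℕ) : ℕ∞) by push_cast; ring,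
      show (1:ℕ∞) = ((1:ℕ):ℕ∞) by simp, ← ENat.coe_sub]
    simp

end EnatSums

section Counting

variable {A : Type*} [Fintype A] [TopologicalSpace A] [DiscreteTopology A]
variable {X C : Set (ℤ → A)} (hX : IsShiftZ X) (hC : IsAsympClass X C)

lemma ellC_eq_card (u : ℕ → A) :
    ellC C u = Nat.card {a : A // consSeq a u ∈ Vset C} := rfl

lemma consSeq_reconstruct (w : ↥(Vset C)) :
    consSeq (w.1 0) ((fV hX hC w).1) = w.1 := consSeq_shiftN w.1

include hX hC in
lemma branch_mem_Vset {u : ℕ → A} (hu : 2 ≤ ellC C u) : u ∈ Vset C := by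
  have h1 : 0 < Nat.card {a : A // consSeq a u ∈ Vset C} := by
    rw [← ellC_eq_card]; omega
  obtain ⟨⟨a, ha⟩⟩ := (Nat.card_pos_iff.1 h1).1
  rw [← shiftN_consSeq a u]
  exact shiftN_mem_Vset hX hC ha

section WithSection

variable (s : ↥(Vset C) → ↥(Vset C)) (hs : ∀ v, fV hX hC (s v) = v)

/-- The first letter of the chosen preimage. -/
def sLetter (u : ↥(Vset C)) : A := (s u).1 0

include hs in
lemma consSeq_sLetter (u : ↥(Vset C)) : consSeq (sLetter s u) u.1 = (s u).1 := by
  have h1 : (fV hX hC (s u)).1 = u.1 := congrArg Subtype.val (hs u)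
  rw [sLetter, ← h1]
  exact consSeq_reconstruct hX hC (s u)

include hs in
lemma consSeq_sLetter_mem (u : ↥(Vset C)) :
    consSeq (sLetter s u) u.1 ∈ Vset C := by
  rw [consSeq_sLetter hX hC s hs u]
  exact (s u).2

include hs in
lemma mem_Eset_iff_letter (w : ↥(Vset C)) :
    w ∈ Eset (fV hX hC) s ↔ w.1 0 ≠ sLetter s (fV hX hC w) := by
  constructor
  · intro hw hla
    apply hw
    apply Subtype.ext
    rw [← consSeq_reconstruct hX hC w, hla, consSeq_sLetter hX hC s hs]
  · intro hla hw
    apply hla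
    conv_lhs => rw [hw]
    rfl

/-- The type of extra letters above a branching sequence. -/
def FibM (u : ℕ → A) : Type _ :=
  {a : A // consSeq a u ∈ Vset C ∧ ∀ hu : u ∈ Vset C, a ≠ sLetter s ⟨u, hu⟩}

instance fibM_finite (u : ℕ → A) : Finite (FibM s u) := by
  unfold FibM; infer_instance

include hs in
lemma branch_of_two_letters {u : ↥(Vset C)} {a b : A}
    (ha : consSeq a u.1 ∈ Vset C) (hb : consSeq b u.1 ∈ Vset C) (hab : a ≠ b) :
    2 ≤ ellC C u.1 := by
  rw [ellC_eq_card]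
  have : Nontrivial {x : A // consSeq x u.1 ∈ Vset C} :=
    ⟨⟨a, ha⟩, ⟨b, hb⟩, by simp [hab]⟩
  exact Finite.one_lt_card

/-- The sigma-decomposition of the extra set. -/
def esetToSigma (w : ↥(Eset (fV hX hC) s)) :
    Σ u : {u : ℕ → A // 2 ≤ ellC C u}, FibM s u.1 := by
  refine ⟨⟨(fV hX hC w.1).1, ?_⟩, ⟨w.1.1 0, ?_, ?_⟩⟩
  · refine branch_of_two_letters hX hC s hs
      (a := w.1.1 0) (b := sLetter s (fV hX hC w.1)) ?_ ?_ ?_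
    · rw [consSeq_reconstruct hX hC w.1]; exact w.1.2
    · exact consSeq_sLetter_mem hX hC s hs _
    · exact (mem_Eset_iff_letter hX hC s hs w.1).1 w.2
  · rw [consSeq_reconstruct hX hC w.1]; exact w.1.2
  · intro hu
    have he : (⟨(fV hX hC w.1).1, hu⟩ : ↥(Vset C)) = fV hX hC w.1 := rfl
    rw [he]
    exact (mem_Eset_iff_letter hX hC s hs w.1).1 w.2

include hs in
lemma esetToSigma_bijective : Function.Bijective (esetToSigma hX hC s hs) := by
  constructor
  · intro w w' h
    have h1 : (fV hX hC w.1).1 = (fV hX hC w'.1).1 :=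
      congrArg (fun z => z.1.1) h
    have h2 : w.1.1 0 = w'.1.1 0 := by
      have := congrArg (fun z => (z.2.1 : A)) h
      exact this
    apply Subtype.ext
    apply Subtype.ext
    rw [← consSeq_reconstruct hX hC w.1, ← consSeq_reconstruct hX hC w'.1, h1, h2]
  · rintro ⟨⟨u, hu2⟩, ⟨a, ha, hane⟩⟩
    have huV : u ∈ Vset C := branch_mem_Vset hX hC hu2
    have hfv : fV hX hC ⟨consSeq a u, ha⟩ = ⟨u, huV⟩ :=
      Subtype.ext (shiftN_consSeq a u)
    have hwE : (⟨consSeq a u, ha⟩ : ↥(Vset C)) ∈ Eset (fV hX hC) s := by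
      rw [mem_Eset_iff_letter hX hC s hs, hfv]
      exact hane huV
    refine ⟨⟨⟨consSeq a u, ha⟩, hwE⟩, ?_⟩
    apply Sigma.subtype_ext
    · apply Subtype.ext
      show (fV hX hC ⟨consSeq a u, ha⟩).1 = u
      rw [hfv]
    · rfl

include hs in
lemma card_FibM {u : ℕ → A} (hu2 : 2 ≤ ellC C u) :
    Nat.card (FibM s u) = ellC C u - 1 := by
  have huV : u ∈ Vset C := branch_mem_Vset hX hC hu2
  set a₀ : A := sLetter s ⟨u, huV⟩ with ha₀
  have he : FibM s u ≃ {a : A // consSeq a u ∈ Vset C ∧ a ≠ a₀} := by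
    apply Equiv.subtypeEquivRight
    intro a
    constructor
    · rintro ⟨h1, h2⟩; exact ⟨h1, h2 huV⟩
    · rintro ⟨h1, h2⟩; exact ⟨h1, fun hu' => h2⟩
  rw [Nat.card_congr he, ellC_eq_card]
  -- now a counting lemma on a finite type
  have hmem : consSeq a₀ u ∈ Vset C := consSeq_sLetter_mem hX hC s hs ⟨u, huV⟩
  rw [Nat.card_eq_fintype_card, Nat.card_eq_fintype_card,
    Fintype.card_subtype, Fintype.card_subtype]
  rw [show (Finset.univ.filter fun a : A => consSeq a u ∈ Vset C ∧ a ≠ a₀)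
      = (Finset.univ.filter fun a : A => consSeq a u ∈ Vset C).erase a₀ by
    ext a
    simp only [Finset.mem_filter, Finset.mem_erase, Finset.mem_univ, true_and]
    tauto]
  rw [Finset.card_erase_of_mem (by simp [hmem])]

end WithSection

end Counting

end Stmt5

section FinalProof
open Stmt5

/-- `ω(C) = Σ_{u ∈ LS_ω(C)} (ℓ_C(u) - 1)`, both sides being
simultaneously finite (equality in `ℕ∞`). -/
theorem stmt5 {A : Type*} [Fintype A] [TopologicalSpace A] [DiscreteTopology A]
    (X : Set (ℤ → A)) (hX : IsShiftZ X)
    (C : Set (ℤ → A)) (hC : IsAsympClass X C) :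
    (orbitsIn C).encard - 1
      = ∑' u : {u : ℕ → A // 2 ≤ ellC C u}, ((ellC C (u : ℕ → A) : ℕ∞) - 1) := by
  classical
  haveI hNE : Nonempty ↥(Vset C) := (vset_nonempty hX hC).to_subtype
  obtain ⟨s, hs, hgood⟩ := exists_good_section (fV hX hC) (fV_surjective hX hC)
  have hcard : ENat.card (PathClasses (fV hX hC)) = ENat.card ↥(Eset (fV hX hC) s) + 1 :=
    card_pathClasses (fV hX hC) s hs hgood (fV_confluent hX hC)
  have horb : (orbitsIn C).encard = ENat.card (PathClasses (fV hX hC)) :=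
    ENat.card_congr (Equiv.ofBijective _ (orbitMap_bijective hX hC))
  rw [horb, hcard, enat_add_one_sub_one]
  by_cases hfin : Finite {u : ℕ → A // 2 ≤ ellC C u}
  · haveI := hfin
    haveI : Fintype {u : ℕ → A // 2 ≤ ellC C u} := Fintype.ofFinite _
    haveI : Finite (Σ u : {u : ℕ → A // 2 ≤ ellC C u}, FibM s u.1) := by infer_instance
    have hEfin : Finite ↥(Eset (fV hX hC) s) :=
      Finite.of_injective _ (esetToSigma_bijective hX hC s hs).1
    haveI := hEfin
    haveI : Fintype ↥(Eset (fV hX hC) s) := Fintype.ofFinite _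
    haveI : ∀ u : {u : ℕ → A // 2 ≤ ellC C u}, Fintype (FibM s u.1) :=
      fun u => Fintype.ofFinite _
    have hcongr := Nat.card_congr (Equiv.ofBijective _ (esetToSigma_bijective hX hC s hs))
    have hsig : Nat.card (Σ u : {u : ℕ → A // 2 ≤ ellC C u}, FibM s u.1)
        = ∑ u : {u : ℕ → A // 2 ≤ ellC C u}, (ellC C u.1 - 1) := by
      rw [Nat.card_eq_fintype_card, Fintype.card_sigma]
      apply Finset.sum_congr rfl
      intro u _
      rw [← Nat.card_eq_fintype_card, card_FibM hX hC s hs u.2]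
    rw [tsum_fintype, ENat.card_eq_coe_fintype_card, ← Nat.card_eq_fintype_card,
      hcongr, hsig, Nat.cast_sum]
    apply Finset.sum_congr rfl
    intro u _
    rw [ENat.coe_sub]
    norm_num
  · haveI : Infinite {u : ℕ → A // 2 ≤ ellC C u} := not_finite_iff_infinite.1 hfin
    rw [enat_tsum_eq_top_of_infinite _ (fun u => ?_)]
    swap
    · rw [show (1:ℕ∞) = ((1:ℕ):ℕ∞) by simp, ← ENat.coe_sub, Nat.cast_le]
      have := u.2
      omega
    have hex : ∀ u : {u : ℕ → A // 2 ≤ ellC C u},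
        ∃ w : ↥(Eset (fV hX hC) s), (fV hX hC w.1).1 = u.1 := by
      intro u
      have huV := branch_mem_Vset hX hC u.2
      have h2 : 1 < Fintype.card {a : A // consSeq a u.1 ∈ Vset C} := by
        rw [← Nat.card_eq_fintype_card, ← ellC_eq_card]
        have := u.2
        omega
      obtain ⟨⟨a, ha⟩, hane⟩ := Fintype.exists_ne_of_one_lt_card h2
        ⟨sLetter s ⟨u.1, huV⟩, consSeq_sLetter_mem hX hC s hs ⟨u.1, huV⟩⟩
      have hane' : a ≠ sLetter s ⟨u.1, huV⟩ := fun h => hane (Subtype.ext h)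
      have hfv : fV hX hC ⟨consSeq a u.1, ha⟩ = ⟨u.1, huV⟩ :=
        Subtype.ext (shiftN_consSeq a u.1)
      refine ⟨⟨⟨consSeq a u.1, ha⟩, ?_⟩, ?_⟩
      · rw [mem_Eset_iff_letter hX hC s hs, hfv]
        exact hane'
      · exact congrArg Subtype.val hfv
    choose w hw using hex
    have hwinj : Function.Injective w := by
      intro u u' h
      apply Subtype.ext
      rw [← hw u, ← hw u', h]
    haveI : Infinite ↥(Eset (fV hX hC) s) := Infinite.of_injective w hwinj
    rw [ENat.card_eq_top_of_infinite]

end FinalProof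
end
end

section
/- Let σ : A* → B* be a morphism and X a shift space on A. If σ is one-sided recognizable on X⁺, then σ is recognizable on X. -/
open scoped Classical

noncomputable section

variable {A B : Type*}

namespace Stmt7Aux

variable {A B : Type*}

lemma wordImg_append (σ : A → List B) (u v : List A) :
    wordImg σ (u ++ v) = wordImg σ u ++ wordImg σ v := by
  simp [wordImg]

lemma prefixImg_succ (σ : A → List B) (x : ℕ → A) (n : ℕ) :
    prefixImg σ x (n + 1) = prefixImg σ x n ++ σ (x n) := by
  unfold prefixImg
  rw [List.ofFn_succ', List.concat_eq_append, wordImg_append]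
  simp [wordImg]

lemma prefixImg_prefix (σ : A → List B) (x : ℕ → A) {p q : ℕ} (hpq : p ≤ q) :
    prefixImg σ x p <+: prefixImg σ x q := by
  induction q with
  | zero =>
    interval_cases p
    exact List.prefix_rfl
  | succ q ih =>
    rcases Nat.lt_or_ge p (q + 1) with h' | h'
    · exact (ih (Nat.lt_succ_iff.mp h')).trans ⟨σ (x q), (prefixImg_succ σ x q).symm⟩
    · have : p = q + 1 := le_antisymm hpq h'
      subst this
      exact List.prefix_rfl

lemma prefixImg_one (σ : A → List B) (x : ℕ → A) :
    prefixImg σ x 1 = σ (x 0) := by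
  simp [prefixImg, wordImg]

lemma prefixImg_shift (σ : A → List B) (x : ℤ → A) (n m : ℕ) :
    prefixImg σ (fun i : ℕ => x ((i : ℤ) - (n : ℤ))) (n + m) = segImg σ x n m := rfl

lemma negLen_eq (σ : A → List B) (x : ℤ → A) (n : ℕ) :
    negLen σ x n = (prefixImg σ (fun i : ℕ => x ((i : ℤ) - (n : ℤ))) n).length := rfl

lemma segImg_eq (σ : A → List B) (x : ℤ → A) (n m : ℕ) :
    segImg σ x n m =
      wordImg σ (List.ofFn fun i : Fin n => x ((i : ℤ) - (n : ℤ))) ++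
        prefixImg σ (plusSeq x) m := by
  rw [segImg, List.ofFn_add, wordImg_append]
  congr 1
  unfold prefixImg plusSeq
  congr 1
  apply congrArg
  funext i
  congr 1
  show ((Fin.natAdd n i : ℕ) : ℤ) - (n : ℤ) = ((i : ℕ) : ℤ)
  simp [Fin.natAdd]

lemma len_segImg (σ : A → List B) (x : ℤ → A) (n m : ℕ) :
    (segImg σ x n m).length = negLen σ x n + (prefixImg σ (plusSeq x) m).length := by
  rw [segImg_eq]
  simp [negLen]

end Stmt7Aux
namespace Stmt7Aux

variable {A B : Type*}

lemma wordImg_cons (σ : A → List B) (a : A) (w : List A) :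
    wordImg σ (a :: w) = σ a ++ wordImg σ w := by
  simp [wordImg]

lemma negLen_succ (σ : A → List B) (x : ℤ → A) (p : ℕ) :
    negLen σ x (p + 1) = (σ (x (-((p : ℤ) + 1)))).length + negLen σ x p := by
  unfold negLen
  rw [List.ofFn_succ, wordImg_cons]
  have h1 : x (((0 : Fin (p+1)) : ℤ) - ((p+1 : ℕ) : ℤ)) = x (-((p : ℤ) + 1)) := by
    congr 1
  have h2 : (List.ofFn fun i : Fin p => x (((i.succ : Fin (p+1)) : ℤ) - ((p+1 : ℕ) : ℤ)))
      = List.ofFn fun i : Fin p => x ((i : ℤ) - (p : ℤ)) := by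
    apply congrArg
    funext i
    congr 1
    show (((i.succ : Fin (p+1)) : ℕ) : ℤ) - ((p+1 : ℕ) : ℤ) = ((i : ℕ) : ℤ) - (p : ℤ)
    simp [Fin.val_succ]
  rw [h1, h2]
  simp

lemma negLen_mono (σ : A → List B) (x : ℤ → A) {p q : ℕ} (hpq : p ≤ q) :
    negLen σ x p ≤ negLen σ x q := by
  induction q with
  | zero => interval_cases p; exact le_rfl
  | succ q ih =>
    rcases Nat.lt_or_ge p (q + 1) with h' | h'
    · exact (ih (Nat.lt_succ_iff.mp h')).trans (by rw [negLen_succ]; omega)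
    · have : p = q + 1 := le_antisymm hpq h'
      subst this; exact le_rfl

lemma exists_growth {σ : A → List B} {x : ℤ → A}
    (h2 : ∀ M : ℕ, ∃ n : ℕ, M ≤ negLen σ x n) (m : ℕ) :
    ∃ n : ℕ, m < n ∧ negLen σ x m < negLen σ x n ∧
      0 < (σ (x (-(n : ℤ)))).length := by
  obtain ⟨N, hN⟩ := h2 (negLen σ x m + 1)
  have hexists : ∃ p, negLen σ x m < negLen σ x p := ⟨N, by omega⟩
  classical
  obtain ⟨n, hfind, hmin⟩ : ∃ n, negLen σ x m < negLen σ x n ∧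
      ∀ q < n, ¬ negLen σ x m < negLen σ x q :=
    ⟨Nat.find hexists, Nat.find_spec hexists, fun q hq => Nat.find_min hexists hq⟩
  have hne : n ≠ 0 := by
    intro h0
    rw [h0] at hfind
    have : negLen σ x 0 = 0 := by simp [negLen, wordImg]
    omega
  obtain ⟨p, rfl⟩ : ∃ p, n = p + 1 := ⟨n - 1, by omega⟩
  have hprev : ¬ negLen σ x m < negLen σ x p := hmin p (by omega)
  have hsucc := negLen_succ σ x p
  have hmn : m < p + 1 := by
    by_contra hc
    exact absurd (negLen_mono σ x (by omega : p + 1 ≤ m)) (by omega)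
  refine ⟨p + 1, hmn, hfind, ?_⟩
  have : -((p : ℤ) + 1) = -(((p+1 : ℕ) : ℤ)) := by push_cast; ring
  rw [← this]
  omega

lemma twoSided_cut {σ : A → List B} {x : ℤ → A} {z : ℤ → B}
    (hz : TwoSidedImage σ x z) (n : ℕ) :
    OneSidedImage σ (fun i : ℕ => x ((i : ℤ) - (n : ℤ)))
      (fun i : ℕ => z ((i : ℤ) - (negLen σ x n : ℤ))) := by
  obtain ⟨h1, h2, h3⟩ := hz
  constructor
  · intro M
    obtain ⟨m, hm⟩ := h1 M
    refine ⟨n + m, ?_⟩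
    rw [prefixImg_shift, len_segImg]
    omega
  · intro p i hi
    have hpq : prefixImg σ (fun i : ℕ => x ((i : ℤ) - (n : ℤ))) p <+: segImg σ x n p := by
      rw [← prefixImg_shift]
      exact prefixImg_prefix _ _ (Nat.le_add_left p n)
    have hlen : i < (segImg σ x n p).length := lt_of_lt_of_le hi hpq.length_le
    have h3' := h3 n p i hlen
    simp only [List.get_eq_getElem] at h3' ⊢
    rw [h3', hpq.getElem hi]

lemma mem_shift_neg {X : Set (ℤ → A)} (hX : shiftZ '' X = X) {x : ℤ → A}
    (hx : x ∈ X) (n : ℕ) : (fun i : ℤ => x (i - (n : ℤ))) ∈ X := by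
  induction n with
  | zero => simpa using hx
  | succ n ih =>
    have hmem : (fun i : ℤ => x (i - (n : ℤ))) ∈ shiftZ '' X := by rw [hX]; exact ih
    obtain ⟨w, hw, hws⟩ := hmem
    have heq : w = fun i : ℤ => x (i - ((n+1 : ℕ) : ℤ)) := by
      funext i
      have h1 := congrFun hws (i - 1)
      simp only [shiftZ] at h1
      rw [show i - 1 + 1 = i by ring] at h1
      rw [h1]
      congr 1
      push_cast
      ring
    rw [← heq]
    exact hw

end Stmt7Aux
/-- if `σ` is one-sided recognizable on `X⁺`, then it is
recognizable on `X`. -/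
theorem stmt7 {A B : Type*} [Fintype A] [TopologicalSpace A] [DiscreteTopology A]
    (σ : A → List B) (X : Set (ℤ → A)) (hX : IsShiftZ X)
    (h : RecognizableN σ (SetPlus X)) :
    RecognizableZ σ X := by
  obtain ⟨-, hXs⟩ := hX
  intro y x k x' k' hrep hrep'
  obtain ⟨hx, hk, z, hz, hyz⟩ := hrep
  obtain ⟨hx', hk', z', hz', hyz'⟩ := hrep'
  -- Step 1: one-sided representations of y⁺ give k = k'.
  have rep1 : IsRepN σ (SetPlus X) (fun i : ℕ => y (i : ℤ))
      (fun i : ℕ => x ((i : ℤ) - ((0:ℕ) : ℤ))) k := by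
    refine ⟨⟨_, Stmt7Aux.mem_shift_neg hXs hx 0, rfl⟩, by simpa using hk,
      ⟨fun i : ℕ => z ((i : ℤ) - (negLen σ x 0 : ℤ)), Stmt7Aux.twoSided_cut hz 0, ?_⟩⟩
    intro n
    have h0 : negLen σ x 0 = 0 := by simp [negLen, wordImg]
    show y (n : ℤ) = z (((n + k : ℕ) : ℤ) - (negLen σ x 0 : ℤ))
    rw [h0, hyz (n : ℤ)]
    congr 1
  have rep1' : IsRepN σ (SetPlus X) (fun i : ℕ => y (i : ℤ))
      (fun i : ℕ => x' ((i : ℤ) - ((0:ℕ) : ℤ))) k' := by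
    refine ⟨⟨_, Stmt7Aux.mem_shift_neg hXs hx' 0, rfl⟩, by simpa using hk',
      ⟨fun i : ℕ => z' ((i : ℤ) - (negLen σ x' 0 : ℤ)), Stmt7Aux.twoSided_cut hz' 0, ?_⟩⟩
    intro n
    have h0 : negLen σ x' 0 = 0 := by simp [negLen, wordImg]
    show y (n : ℤ) = z' (((n + k' : ℕ) : ℤ) - (negLen σ x' 0 : ℤ))
    rw [h0, hyz' (n : ℤ)]
    congr 1
  obtain ⟨-, hkk'⟩ := h _ _ _ _ _ rep1 rep1'
  subst hkk'
  -- Hence z = z'.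
  have hzz' : z' = z := by
    funext i
    have h1 := hyz (i - k)
    have h2 := hyz' (i - k)
    rw [show i - (k : ℤ) + (k : ℤ) = i by ring] at h1 h2
    rw [← h1, ← h2]
  rw [hzz'] at hz'
  clear hzz' hyz hyz'
  -- Step 2: for every m there is n ≥ m with x and x' equal from -n on.
  have key : ∀ m : ℕ, ∃ n : ℕ, m ≤ n ∧
      ∀ i : ℕ, x ((i : ℤ) - (n : ℤ)) = x' ((i : ℤ) - (n : ℤ)) := by
    intro m
    obtain ⟨n, hmn, hgr, hpos⟩ := Stmt7Aux.exists_growth hz.2.1 m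
    have hc1 : 1 ≤ negLen σ x n := by omega
    have hex : ∃ e, negLen σ x n ≤ negLen σ x' e := hz'.2.1 (negLen σ x n)
    classical
    obtain ⟨e, he, hemin⟩ : ∃ e, negLen σ x n ≤ negLen σ x' e ∧
        ∀ q < e, ¬ negLen σ x n ≤ negLen σ x' q :=
      ⟨Nat.find hex, Nat.find_spec hex, fun q hq => Nat.find_min hex hq⟩
    have hene : e ≠ 0 := by
      intro h0
      rw [h0] at he
      have : negLen σ x' 0 = 0 := by simp [negLen, wordImg]
      omega
    obtain ⟨p, rfl⟩ : ∃ p, e = p + 1 := ⟨e - 1, by omega⟩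
    have hprev : negLen σ x' p < negLen σ x n := by
      have := hemin p (by omega)
      omega
    have hsucc := Stmt7Aux.negLen_succ σ x' p
    have hrlt : negLen σ x' (p+1) - negLen σ x n < (σ (x' (-((p : ℤ) + 1)))).length := by
      omega
    have repA : IsRepN σ (SetPlus X) (fun i : ℕ => z ((i : ℤ) - (negLen σ x n : ℤ)))
        (fun i : ℕ => x ((i : ℤ) - (n : ℤ))) 0 := by
      refine ⟨⟨_, Stmt7Aux.mem_shift_neg hXs hx n, rfl⟩, by simpa using hpos,
        ⟨fun i : ℕ => z ((i : ℤ) - (negLen σ x n : ℤ)), Stmt7Aux.twoSided_cut hz n, ?_⟩⟩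
      intro i
      norm_num
    have repB : IsRepN σ (SetPlus X) (fun i : ℕ => z ((i : ℤ) - (negLen σ x n : ℤ)))
        (fun i : ℕ => x' ((i : ℤ) - ((p+1 : ℕ) : ℤ))) (negLen σ x' (p+1) - negLen σ x n) := by
      refine ⟨⟨_, Stmt7Aux.mem_shift_neg hXs hx' (p+1), rfl⟩, ?_,
        ⟨fun i : ℕ => z ((i : ℤ) - (negLen σ x' (p+1) : ℤ)),
          Stmt7Aux.twoSided_cut hz' (p+1), ?_⟩⟩
      · have harg : ((0:ℕ) : ℤ) - ((p+1 : ℕ) : ℤ) = -((p : ℤ) + 1) := by push_cast; ring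
        show negLen σ x' (p+1) - negLen σ x n
            < (σ (x' (((0:ℕ) : ℤ) - ((p+1 : ℕ) : ℤ)))).length
        rw [harg]
        exact hrlt
      · intro i
        show z ((i : ℤ) - (negLen σ x n : ℤ))
            = z (((i + (negLen σ x' (p+1) - negLen σ x n) : ℕ) : ℤ) - (negLen σ x' (p+1) : ℤ))
        congr 1
        rw [Nat.cast_add, Nat.cast_sub he]
        ring
    obtain ⟨hAB, hr0⟩ := h _ _ _ _ _ repA repB
    have hceq : negLen σ x' (p+1) = negLen σ x n := by omega
    have hseq : ∀ i : ℕ, x ((i : ℤ) - (n : ℤ)) = x' ((i : ℤ) - ((p+1 : ℕ) : ℤ)) :=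
      fun i => congrFun hAB i
    have hfun : (fun i : ℕ => x ((i : ℤ) - (n : ℤ)))
        = fun i : ℕ => x' ((i : ℤ) - ((p+1 : ℕ) : ℤ)) := funext hseq
    rcases lt_trichotomy n (p + 1) with hlt | heq | hgt
    · exfalso
      obtain ⟨u, hu⟩ : ∃ u, p + 1 = n + u := ⟨p + 1 - n, by omega⟩
      have hlen1 : negLen σ x' (p+1)
          = (prefixImg σ (fun i : ℕ => x ((i : ℤ) - (n : ℤ))) (n + u)).length := by
        rw [← hu, Stmt7Aux.negLen_eq, hfun]
      rw [Stmt7Aux.prefixImg_shift, Stmt7Aux.len_segImg] at hlen1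
      have hu1 : 1 ≤ u := by omega
      have hmono := (Stmt7Aux.prefixImg_prefix σ (plusSeq x) hu1).length_le
      rw [Stmt7Aux.prefixImg_one] at hmono
      have hx0 : plusSeq x 0 = x 0 := by simp [plusSeq]
      rw [hx0] at hmono
      omega
    · refine ⟨n, by omega, fun i => ?_⟩
      rw [hseq i]
      congr 2
      omega
    · exfalso
      obtain ⟨u, hu⟩ : ∃ u, n = (p + 1) + u := ⟨n - (p+1), by omega⟩
      have hlen1 : negLen σ x n
          = (prefixImg σ (fun i : ℕ => x' ((i : ℤ) - ((p+1 : ℕ) : ℤ))) ((p+1) + u)).length := by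
        rw [← hu, Stmt7Aux.negLen_eq, hfun]
      rw [Stmt7Aux.prefixImg_shift, Stmt7Aux.len_segImg] at hlen1
      have hu1 : 1 ≤ u := by omega
      have hmono := (Stmt7Aux.prefixImg_prefix σ (plusSeq x') hu1).length_le
      rw [Stmt7Aux.prefixImg_one] at hmono
      have hx'0 : plusSeq x' 0 = x' 0 := by simp [plusSeq]
      rw [hx'0] at hmono
      omega
  refine ⟨funext fun s => ?_, rfl⟩
  obtain ⟨n, hmn, hn⟩ := key s.natAbs
  have hsn : 0 ≤ s + (n : ℤ) := by omega
  have := hn (s + (n : ℤ)).toNat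
  rwa [Int.toNat_of_nonneg hsn, show s + (n : ℤ) - (n : ℤ) = s by ring] at this
end
end

section
/- Let σ : A* → B* be a non-erasing right-marked morphism (the words σ(a), a ∈ A, end with pairwise distinct letters) and let X be a shift space on A. If σ is recognizable on X, then σ is one-sided recognizable on X⁺. -/
open scoped Classical

noncomputable section

variable {A B : Type*}

/-!
If two one-sided representations `(x₁⁺, k₁)`, `(x₂⁺, k₂)` of `y` cut `y` into σ-blocks differently
at positions arbitrarily far to the right (different offsets in a block, or different letters), then
a limit of shifts of `x₁` and `x₂` along these positions yields two distinct σ-representations of a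
single two-sided point, contradicting recognizability on `X`. Hence the two factorisations coincide
from some position on; in particular they share a cut, and `x₁⁺`, `x₂⁺` agree to its right. To its
left, right-marking reads the factorisation backwards: the letter of `y` just before a common cut is
the last letter of both blocks ending there, so these blocks come from the same letter and the
previous cut is common again. Descending to the beginning of `y` forces `k₁ = k₂` and `x₁⁺ = x₂⁺`.
-/

open Filter Topology

section Image

variable (σ : A → List B)

def prefixLen (x : ℕ → A) (n : ℕ) : ℕ := (prefixImg σ x n).length

theorem prefixImg_succ (x : ℕ → A) (n : ℕ) :
    prefixImg σ x (n + 1) = prefixImg σ x n ++ σ (x n) := by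
  rw [prefixImg, List.ofFn_succ']
  simp [wordImg, prefixImg]

theorem prefixImg_succ' (x : ℕ → A) (n : ℕ) :
    prefixImg σ x (n + 1) = σ (x 0) ++ prefixImg σ (shiftN x) n := by
  simp [prefixImg, wordImg, List.ofFn_succ, shiftN]

theorem prefixImg_congr {x x' : ℕ → A} {n : ℕ} (h : ∀ j < n, x j = x' j) :
    prefixImg σ x n = prefixImg σ x' n := by
  simp only [prefixImg]
  congr 2
  funext j
  exact h j j.2

theorem prefixImg_isPrefix (x : ℕ → A) {m n : ℕ} (h : m ≤ n) :
    prefixImg σ x m <+: prefixImg σ x n := by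
  induction n, h using Nat.le_induction with
  | base => exact List.prefix_refl _
  | succ n _ ih => exact ih.trans (by rw [prefixImg_succ]; exact List.prefix_append _ _)

theorem prefixLen_zero (x : ℕ → A) : prefixLen σ x 0 = 0 := rfl

theorem prefixLen_succ (x : ℕ → A) (n : ℕ) :
    prefixLen σ x (n + 1) = prefixLen σ x n + (σ (x n)).length := by
  simp [prefixLen, prefixImg_succ]

theorem prefixLen_succ' (x : ℕ → A) (n : ℕ) :
    prefixLen σ x (n + 1) = (σ (x 0)).length + prefixLen σ (shiftN x) n := by
  simp [prefixLen, prefixImg_succ']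

theorem prefixLen_mono (x : ℕ → A) : Monotone (prefixLen σ x) :=
  monotone_nat_of_le_succ fun n => by rw [prefixLen_succ]; omega

theorem lt_prefixLen {x : ℕ → A} {k t : ℕ} (hk : k < (σ (x 0)).length) (ht : t ≠ 0) :
    k < prefixLen σ x t :=
  hk.trans_le (by simpa [prefixLen_succ, prefixLen_zero] using
    prefixLen_mono σ x (Nat.one_le_iff_ne_zero.2 ht))

theorem add_le_prefixLen_add (hne : ∀ a, σ a ≠ []) (x : ℕ → A) (m k : ℕ) :
    prefixLen σ x m + k ≤ prefixLen σ x (m + k) := by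
  induction k with
  | zero => rfl
  | succ k ih =>
    rw [show m + (k + 1) = m + k + 1 by omega, prefixLen_succ]
    have := List.length_pos_iff.2 (hne (x (m + k)))
    omega

theorem le_prefixLen (hne : ∀ a, σ a ≠ []) (x : ℕ → A) (n : ℕ) : n ≤ prefixLen σ x n := by
  simpa [prefixLen_zero] using add_le_prefixLen_add σ hne x 0 n

theorem exists_prefixLen_add_eq (hne : ∀ a, σ a ≠ []) (x : ℕ → A) (p : ℕ) :
    ∃ m o, o < (σ (x m)).length ∧ prefixLen σ x m + o = p := by
  induction p with
  | zero => exact ⟨0, 0, List.length_pos_iff.2 (hne _), rfl⟩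
  | succ p ih =>
    obtain ⟨m, o, ho, rfl⟩ := ih
    by_cases h : o + 1 < (σ (x m)).length
    · exact ⟨m, o + 1, h, rfl⟩
    · exact ⟨m + 1, 0, List.length_pos_iff.2 (hne _), by rw [prefixLen_succ]; omega⟩

def imgN (hne : ∀ a, σ a ≠ []) (x : ℕ → A) (i : ℕ) : B :=
  (prefixImg σ x (i + 1))[i]'(le_prefixLen σ hne x (i + 1))

theorem imgN_eq_getElem (hne : ∀ a, σ a ≠ []) (x : ℕ → A) {n i : ℕ}
    (hi : i < (prefixImg σ x n).length) : imgN σ hne x i = (prefixImg σ x n)[i] := by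
  rcases le_total (i + 1) n with h | h
  · exact (prefixImg_isPrefix σ x h).getElem _
  · exact ((prefixImg_isPrefix σ x h).getElem hi).symm

theorem OneSidedImage.eq_imgN (hne : ∀ a, σ a ≠ []) {x : ℕ → A} {z : ℕ → B}
    (h : OneSidedImage σ x z) : z = imgN σ hne x := by
  funext i
  rw [h.2 (i + 1) i (le_prefixLen σ hne x (i + 1)), List.get_eq_getElem]
  rfl

theorem imgN_shiftN (hne : ∀ a, σ a ≠ []) (x : ℕ → A) (i : ℕ) :
    imgN σ hne (shiftN x) i = imgN σ hne x ((σ (x 0)).length + i) := by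
  have hi := le_prefixLen σ hne (shiftN x) (i + 1)
  have hlen : (σ (x 0)).length + i < (prefixImg σ x (i + 1 + 1)).length := by
    change _ < prefixLen σ x (i + 1 + 1)
    rw [prefixLen_succ']
    omega
  rw [imgN_eq_getElem σ hne x hlen, List.getElem_of_eq (prefixImg_succ' σ x (i + 1)),
    List.getElem_append_right (Nat.le_add_right _ _)]
  simp only [Nat.add_sub_cancel_left]
  rfl

theorem imgN_congr (hne : ∀ a, σ a ≠ []) {x x' : ℕ → A} {n i : ℕ} (h : ∀ j < n, x j = x' j)
    (hi : i < (prefixImg σ x n).length) : imgN σ hne x i = imgN σ hne x' i := by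
  have e := prefixImg_congr σ h
  rw [imgN_eq_getElem σ hne x hi, imgN_eq_getElem σ hne x' (e ▸ hi)]
  exact List.getElem_of_eq e _

theorem getLast?_eq_imgN (hne : ∀ a, σ a ≠ []) (x : ℕ → A) (t : ℕ) :
    (σ (x t)).getLast? = some (imgN σ hne x (prefixLen σ x (t + 1) - 1)) := by
  have hlt : prefixLen σ x (t + 1) - 1 < prefixLen σ x (t + 1) := by
    have := le_prefixLen σ hne x (t + 1)
    omega
  rw [← List.getLast?_append_of_ne_nil _ (hne _), ← prefixImg_succ, List.getLast?_eq_getElem?]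
  show (prefixImg σ x (t + 1))[prefixLen σ x (t + 1) - 1]? = _
  rw [List.getElem?_eq_getElem hlt, imgN_eq_getElem σ hne x hlt]

end Image

section TwoSided

variable (σ : A → List B)

def negSeq (x : ℤ → A) (n : ℕ) : ℕ → A := fun j => x (j - n)

theorem negSeq_zero (x : ℤ → A) : negSeq x 0 = plusSeq x := by
  funext j
  simp [negSeq, plusSeq]

theorem shiftN_negSeq_succ (x : ℤ → A) (n : ℕ) : shiftN (negSeq x (n + 1)) = negSeq x n := by
  funext j
  simp only [shiftN, negSeq]
  congr 1
  push_cast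
  ring

theorem negSeq_succ_zero (x : ℤ → A) (n : ℕ) : negSeq x (n + 1) 0 = x (-(n + 1)) := by
  simp [negSeq]

theorem negSeq_shiftZ_succ (x : ℤ → A) (n : ℕ) : negSeq (shiftZ x) (n + 1) = negSeq x n := by
  funext j
  simp only [shiftZ, negSeq]
  congr 1
  push_cast
  ring

theorem negLen_eq_prefixLen (x : ℤ → A) (n : ℕ) : negLen σ x n = prefixLen σ (negSeq x n) n :=
  rfl

theorem negLen_succ (x : ℤ → A) (n : ℕ) :
    negLen σ x (n + 1) = (σ (x (-(n + 1)))).length + negLen σ x n := by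
  rw [negLen_eq_prefixLen, prefixLen_succ', shiftN_negSeq_succ, negLen_eq_prefixLen,
    negSeq_succ_zero]

theorem negLen_shiftZ_succ (x : ℤ → A) (n : ℕ) :
    negLen σ (shiftZ x) (n + 1) = negLen σ x n + (σ (x 0)).length := by
  rw [negLen_eq_prefixLen, negSeq_shiftZ_succ, prefixLen_succ, negLen_eq_prefixLen]
  simp [negSeq]

theorem negLen_mono (x : ℤ → A) : Monotone (negLen σ x) :=
  monotone_nat_of_le_succ fun n => by rw [negLen_succ]; omega

theorem le_negLen (hne : ∀ a, σ a ≠ []) (x : ℤ → A) (n : ℕ) : n ≤ negLen σ x n :=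
  le_prefixLen σ hne (negSeq x n) n

/-- The letter at position `s` of the two-sided image `σ(x)`, read off the one-sided image of
`x_{[-n,∞)}` for `n = |s|`; by `imgZ_eq` any `n` with `|σ(x_{[-n,0)})| ≥ -s` gives the same. -/
def imgZ (hne : ∀ a, σ a ≠ []) (x : ℤ → A) (s : ℤ) : B :=
  imgN σ hne (negSeq x s.natAbs) (s + negLen σ x s.natAbs).toNat

theorem imgZ_eq (hne : ∀ a, σ a ≠ []) (x : ℤ → A) {s : ℤ} {n : ℕ}
    (h : 0 ≤ s + negLen σ x n) :
    imgZ σ hne x s = imgN σ hne (negSeq x n) (s + negLen σ x n).toNat := by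
  set f : ℕ → B := fun n => imgN σ hne (negSeq x n) (s + negLen σ x n).toNat
  have step : ∀ n, 0 ≤ s + negLen σ x n → f (n + 1) = f n := by
    intro n hn
    simp only [f, ← shiftN_negSeq_succ x n, imgN_shiftN, negLen_succ]
    rw [negSeq_succ_zero]
    congr 1
    omega
  have key : ∀ {n₀ n : ℕ}, n₀ ≤ n → 0 ≤ s + negLen σ x n₀ → f n = f n₀ := by
    intro n₀ n hn h₀
    induction n, hn using Nat.le_induction with
    | base => rfl
    | succ n hn ih =>
      have := negLen_mono σ x hn
      rw [step n (by omega), ih]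
  have h₀ : 0 ≤ s + negLen σ x s.natAbs := by
    have := le_negLen σ hne x s.natAbs
    omega
  rcases le_total s.natAbs n with hn | hn
  · exact (key hn h₀).symm
  · exact key hn h

theorem imgZ_natCast (hne : ∀ a, σ a ≠ []) (x : ℤ → A) (n : ℕ) :
    imgZ σ hne x n = imgN σ hne (plusSeq x) n := by
  rw [imgZ_eq σ hne x (n := 0) (by simp [negLen_eq_prefixLen, prefixLen_zero]), negSeq_zero]
  simp [negLen_eq_prefixLen, prefixLen_zero]

theorem twoSidedImage_imgZ (hne : ∀ a, σ a ≠ []) (x : ℤ → A) :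
    TwoSidedImage σ x (imgZ σ hne x) := by
  refine ⟨fun m => ⟨m, le_prefixLen σ hne _ m⟩, fun m => ⟨m, le_negLen σ hne x m⟩,
    fun n m i hi => ?_⟩
  rw [imgZ_eq σ hne x (n := n) (by omega), sub_add_cancel, Int.toNat_natCast]
  exact imgN_eq_getElem σ hne _ hi

theorem imgZ_shiftZ (hne : ∀ a, σ a ≠ []) (x : ℤ → A) (s : ℤ) :
    imgZ σ hne (shiftZ x) s = imgZ σ hne x (s + (σ (x 0)).length) := by
  have h₁ := le_negLen σ hne (shiftZ x) (s.natAbs + 1)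
  have h₂ := le_negLen σ hne x s.natAbs
  rw [imgZ_eq σ hne (shiftZ x) (n := s.natAbs + 1) (by omega),
    imgZ_eq σ hne x (n := s.natAbs) (by omega), negSeq_shiftZ_succ, negLen_shiftZ_succ]
  congr 1
  omega

theorem shiftZ_iterate_apply (x : ℤ → A) (m : ℕ) (j : ℤ) : shiftZ^[m] x j = x (j + m) := by
  induction m generalizing x j with
  | zero => simp
  | succ m ih =>
    rw [Function.iterate_succ_apply, ih]
    simp only [shiftZ]
    congr 1
    push_cast
    ring

theorem imgZ_shiftZ_iterate (hne : ∀ a, σ a ≠ []) (x : ℤ → A) (m : ℕ) (s : ℤ) :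
    imgZ σ hne (shiftZ^[m] x) s = imgZ σ hne x (s + prefixLen σ (plusSeq x) m) := by
  induction m generalizing s with
  | zero => simp [prefixLen_zero]
  | succ m ih =>
    rw [Function.iterate_succ_apply', imgZ_shiftZ, ih, shiftZ_iterate_apply, prefixLen_succ]
    simp only [zero_add, plusSeq]
    push_cast
    ring_nf

theorem imgZ_congr (hne : ∀ a, σ a ≠ []) {u v : ℤ → A} {s : ℤ}
    (h : ∀ j : ℤ, j.natAbs ≤ s.natAbs + 1 → u j = v j) : imgZ σ hne u s = imgZ σ hne v s := by
  set n := s.natAbs + 1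
  have hseq : ∀ j < n + n, negSeq u n j = negSeq v n j := fun j hj => h _ (by omega)
  have hlen : negLen σ u n = negLen σ v n := by
    rw [negLen_eq_prefixLen, negLen_eq_prefixLen, prefixLen,
      prefixImg_congr σ fun j hj => hseq j (by omega)]
    rfl
  have h₀ : 0 ≤ s + negLen σ u n := by
    have := le_negLen σ hne u n
    omega
  rw [imgZ_eq σ hne u h₀, imgZ_eq σ hne v (hlen ▸ h₀), ← hlen]
  apply imgN_congr σ hne hseq
  have := add_le_prefixLen_add σ hne (negSeq u n) n n
  rw [← negLen_eq_prefixLen] at this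
  change _ < prefixLen σ _ _
  omega

end TwoSided

theorem window_mem_nhds [TopologicalSpace A] [DiscreteTopology A] (u : ℤ → A) (R : ℕ) :
    {v : ℤ → A | ∀ s : ℤ, s.natAbs ≤ R → v s = u s} ∈ 𝓝 u := by
  have hfin : {s : ℤ | s.natAbs ≤ R}.Finite :=
    (Set.finite_Icc (-(R : ℤ)) R).subset fun s (hs : s.natAbs ≤ R) => by
      simp only [Set.mem_Icc]
      omega
  exact (hfin.eventually_all).2 fun s _ =>
    (continuous_apply s).continuousAt.preimage_mem_nhds (isOpen_discrete {u s} |>.mem_nhds rfl)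

theorem exists_frequently_agree_windows [Finite A] [TopologicalSpace A] [DiscreteTopology A]
    {X : Set (ℤ → A)} (hX : IsClosed X) {N : ℕ} (v w : ℕ → ℤ → A) (a b : ℕ → ℕ)
    (hv : ∀ j, v j ∈ X) (hw : ∀ j, w j ∈ X) (ha : ∀ j, a j ≤ N) (hb : ∀ j, b j ≤ N) :
    ∃ v₀ ∈ X, ∃ w₀ ∈ X, ∃ a₀ b₀ : ℕ, ∀ R J : ℕ, ∃ j ≥ J, a j = a₀ ∧ b j = b₀ ∧
      ∀ s : ℤ, s.natAbs ≤ R → v j s = v₀ s ∧ w j s = w₀ s := by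
  have hK : IsCompact ((X ×ˢ Set.Iic N) ×ˢ (X ×ˢ Set.Iic N)) :=
    (hX.isCompact.prod (Set.finite_Iic N).isCompact).prod
      (hX.isCompact.prod (Set.finite_Iic N).isCompact)
  obtain ⟨⟨⟨v₀, a₀⟩, w₀, b₀⟩, ⟨⟨hv₀, -⟩, hw₀, -⟩, hclus⟩ :=
    hK.exists_mapClusterPt (f := atTop) (u := fun j => ((v j, a j), (w j, b j)))
      (tendsto_principal.2 (Eventually.of_forall fun j => ⟨⟨hv j, ha j⟩, hw j, hb j⟩))
  refine ⟨v₀, hv₀, w₀, hw₀, a₀, b₀, fun R J => ?_⟩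
  have hU := prod_mem_nhds (prod_mem_nhds (window_mem_nhds v₀ R) (isOpen_discrete {a₀} |>.mem_nhds rfl))
    (prod_mem_nhds (window_mem_nhds w₀ R) (isOpen_discrete {b₀} |>.mem_nhds rfl))
  obtain ⟨j, ⟨⟨hvj, haj⟩, hwj, hbj⟩, hjJ⟩ :=
    ((mapClusterPt_iff_frequently.1 hclus _ hU).and_eventually (eventually_ge_atTop J)).exists
  exact ⟨j, hjJ, haj, hbj, fun s hs => ⟨hvj s hs, hwj s hs⟩⟩

section Synchronization

variable (σ : A → List B)

/-- Position `p` of `y` lies at offset `o` in the block `σ(x₁ m)` when `p + k₁ = |σ(x₁[0,m))| + o`,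
and likewise for `(x₂, k₂)`; from position `M` on, the two readings give the same offset and the
same letter. -/
def CutsAgreeFrom (x₁ : ℕ → A) (k₁ : ℕ) (x₂ : ℕ → A) (k₂ M : ℕ) : Prop :=
  ∀ m m' o o', o < (σ (x₁ m)).length → o' < (σ (x₂ m')).length →
    prefixLen σ x₁ m + o + k₂ = prefixLen σ x₂ m' + o' + k₁ → M + k₁ ≤ prefixLen σ x₁ m + o →
    o = o' ∧ x₁ m = x₂ m'

theorem RecognizableZ.eq_of_imgZ_eq (hne : ∀ a, σ a ≠ []) {X : Set (ℤ → A)}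
    (hrec : RecognizableZ σ X) {u₁ u₂ : ℤ → A} (hu₁ : u₁ ∈ X) (hu₂ : u₂ ∈ X) {c₁ c₂ : ℕ}
    (hc₁ : c₁ < (σ (u₁ 0)).length) (hc₂ : c₂ < (σ (u₂ 0)).length)
    (h : ∀ t : ℤ, imgZ σ hne u₁ (t + c₁) = imgZ σ hne u₂ (t + c₂)) : u₁ = u₂ ∧ c₁ = c₂ :=
  hrec _ u₁ c₁ u₂ c₂ ⟨hu₁, hc₁, _, twoSidedImage_imgZ σ hne u₁, fun _ => rfl⟩
    ⟨hu₂, hc₂, _, twoSidedImage_imgZ σ hne u₂, h⟩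

theorem exists_cutsAgreeFrom [Finite A] [TopologicalSpace A] [DiscreteTopology A]
    (hne : ∀ a, σ a ≠ []) {X : Set (ℤ → A)} (hX : IsShiftZ X) (hrec : RecognizableZ σ X)
    {x₁ x₂ : ℤ → A} (hx₁ : x₁ ∈ X) (hx₂ : x₂ ∈ X) {k₁ k₂ : ℕ}
    (hy : ∀ s, imgN σ hne (plusSeq x₁) (s + k₁) = imgN σ hne (plusSeq x₂) (s + k₂)) :
    ∃ M, CutsAgreeFrom σ (plusSeq x₁) k₁ (plusSeq x₂) k₂ M := by
  by_contra! hbad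
  simp only [CutsAgreeFrom, not_forall, not_and_or] at hbad
  choose m m' o o' ho ho' hcut hfar hdiff using hbad
  have hmaps : Set.MapsTo shiftZ X X := by simpa only [hX.2] using Set.mapsTo_image shiftZ X
  obtain ⟨N, hN⟩ := (Set.finite_range fun a => (σ a).length).bddAbove
  obtain ⟨u₁, hu₁, u₂, hu₂, c₁, c₂, hlim⟩ := exists_frequently_agree_windows hX.1
    (fun j => shiftZ^[m j] x₁) (fun j => shiftZ^[m' j] x₂) o o'
    (fun j => hmaps.iterate _ hx₁) (fun j => hmaps.iterate _ hx₂)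
    (fun j => (ho j).le.trans (hN ⟨_, rfl⟩)) (fun j => (ho' j).le.trans (hN ⟨_, rfl⟩))
  have himg : ∀ t : ℤ, imgZ σ hne u₁ (t + c₁) = imgZ σ hne u₂ (t + c₂) := by
    intro t
    obtain ⟨j, hj, rfl, rfl, hw⟩ := hlim ((t + c₁).natAbs + (t + c₂).natAbs + 1) t.natAbs
    rw [← imgZ_congr σ hne fun s hs => (hw s (by omega)).1,
      ← imgZ_congr σ hne fun s hs => (hw s (by omega)).2,
      imgZ_shiftZ_iterate, imgZ_shiftZ_iterate]
    have := hcut j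
    have := hfar j
    obtain ⟨n, hn⟩ : ∃ n : ℕ, (n : ℤ) = t + prefixLen σ (plusSeq x₁) (m j) + o j - k₁ :=
      ⟨_, Int.toNat_of_nonneg (by omega)⟩
    calc imgZ σ hne x₁ (t + o j + prefixLen σ (plusSeq x₁) (m j))
        = imgZ σ hne x₁ (n + k₁ : ℕ) := by congr 1; push_cast; omega
      _ = imgZ σ hne x₂ (n + k₂ : ℕ) := by rw [imgZ_natCast, imgZ_natCast, hy]
      _ = imgZ σ hne x₂ (t + o' j + prefixLen σ (plusSeq x₂) (m' j)) := by
        congr 1; push_cast; omega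
  obtain ⟨j, -, rfl, rfl, hw⟩ := hlim 0 0
  have hletter₁ : plusSeq x₁ (m j) = u₁ 0 := by
    simpa [shiftZ_iterate_apply, plusSeq] using (hw 0 le_rfl).1
  have hletter₂ : plusSeq x₂ (m' j) = u₂ 0 := by
    simpa [shiftZ_iterate_apply, plusSeq] using (hw 0 le_rfl).2
  obtain ⟨rfl, hc⟩ := hrec.eq_of_imgZ_eq σ hne hu₁ hu₂
    (hletter₁ ▸ ho j) (hletter₂ ▸ ho' j) himg
  exact (hdiff j).elim (· hc) (· (hletter₁.trans hletter₂.symm))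

theorem eq_of_common_cut (hne : ∀ a, σ a ≠ [])
    (hrm : ∀ a b : A, (σ a).getLast? = (σ b).getLast? → a = b) {x₁ x₂ : ℕ → A} {k₁ k₂ : ℕ}
    (hk₁ : k₁ < (σ (x₁ 0)).length) (hk₂ : k₂ < (σ (x₂ 0)).length)
    (hy : ∀ s, imgN σ hne x₁ (s + k₁) = imgN σ hne x₂ (s + k₂)) {t t' : ℕ}
    (h : prefixLen σ x₁ t + k₂ = prefixLen σ x₂ t' + k₁) :
    t = t' ∧ k₁ = k₂ ∧ ∀ i < t, x₁ i = x₂ i := by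
  induction t generalizing t' with
  | zero =>
    rcases t' with _ | t'
    · simp_all [prefixLen_zero]
    · have := lt_prefixLen σ hk₂ t'.add_one_ne_zero
      rw [prefixLen_zero] at h
      omega
  | succ t ih =>
    rcases t' with _ | t'
    · have := lt_prefixLen σ hk₁ t.add_one_ne_zero
      rw [prefixLen_zero] at h
      omega
    · have h₁ := lt_prefixLen σ hk₁ t.add_one_ne_zero
      have hlast : x₁ t = x₂ t' := by
        refine hrm _ _ ?_
        rw [getLast?_eq_imgN σ hne, getLast?_eq_imgN σ hne, Option.some_inj]
        have := hy (prefixLen σ x₁ (t + 1) - 1 - k₁)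
        rwa [show prefixLen σ x₁ (t + 1) - 1 - k₁ + k₁ = prefixLen σ x₁ (t + 1) - 1 by omega,
          show prefixLen σ x₁ (t + 1) - 1 - k₁ + k₂ = prefixLen σ x₂ (t' + 1) - 1 by omega]
          at this
      rw [prefixLen_succ, prefixLen_succ, hlast] at h
      obtain ⟨rfl, hk, hlt⟩ := ih (t' := t') (by omega)
      refine ⟨rfl, hk, fun i hi => ?_⟩
      rcases Nat.lt_succ_iff_lt_or_eq.1 hi with hi | rfl
      exacts [hlt i hi, hlast]

theorem CutsAgreeFrom.eq (hne : ∀ a, σ a ≠ [])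
    (hrm : ∀ a b : A, (σ a).getLast? = (σ b).getLast? → a = b) {x₁ x₂ : ℕ → A} {k₁ k₂ M : ℕ}
    (hk₁ : k₁ < (σ (x₁ 0)).length) (hk₂ : k₂ < (σ (x₂ 0)).length)
    (hy : ∀ s, imgN σ hne x₁ (s + k₁) = imgN σ hne x₂ (s + k₂))
    (hM : CutsAgreeFrom σ x₁ k₁ x₂ k₂ M) : x₁ = x₂ ∧ k₁ = k₂ := by
  set t := M + k₁
  have hfar : M + k₁ ≤ prefixLen σ x₁ t := le_prefixLen σ hne x₁ t
  obtain ⟨t', o', ho', hcut⟩ := exists_prefixLen_add_eq σ hne x₂ (prefixLen σ x₁ t + k₂ - k₁)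
  obtain ⟨rfl, -⟩ := hM t t' 0 o' (List.length_pos_iff.2 (hne _)) ho' (by omega) (by omega)
  obtain ⟨rfl, rfl, hhead⟩ := eq_of_common_cut σ hne hrm hk₁ hk₂ hy (t := t) (t' := t')
    (by omega)
  have step : ∀ s, t ≤ s → prefixLen σ x₁ s = prefixLen σ x₂ s →
      x₁ s = x₂ s ∧ prefixLen σ x₁ (s + 1) = prefixLen σ x₂ (s + 1) := by
    intro s hs hL
    have := prefixLen_mono σ x₁ hs
    obtain ⟨-, hx⟩ := hM s s 0 0 (List.length_pos_iff.2 (hne _)) (List.length_pos_iff.2 (hne _))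
      (by omega) (by omega)
    exact ⟨hx, by rw [prefixLen_succ, prefixLen_succ, hx, hL]⟩
  have htail : ∀ j, prefixLen σ x₁ (t + j) = prefixLen σ x₂ (t + j) := by
    intro j
    induction j with
    | zero =>
      rw [Nat.add_zero]
      omega
    | succ j ih => exact (step _ (by omega) ih).2
  refine ⟨funext fun i => ?_, rfl⟩
  rcases lt_or_ge i t with hi | hi
  · exact hhead i hi
  · obtain ⟨j, rfl⟩ := Nat.exists_eq_add_of_le hi
    exact (step _ hi (htail j)).1

end Synchronization

/-- if `σ` is non-erasing, right-marked and recognizable on `X`,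
then it is one-sided recognizable on `X⁺`. -/
theorem stmt8 {A B : Type*} [Fintype A] [TopologicalSpace A] [DiscreteTopology A]
    (σ : A → List B) (X : Set (ℤ → A)) (hX : IsShiftZ X)
    (hne : ∀ a : A, σ a ≠ [])
    (hrm : ∀ a b : A, (σ a).getLast? = (σ b).getLast? → a = b)
    (hrec : RecognizableZ σ X) :
    RecognizableN σ (SetPlus X) := by
  rintro y _ k₁ _ k₂ ⟨⟨x₁, hx₁, rfl⟩, hk₁, z₁, hz₁, hy₁⟩ ⟨⟨x₂, hx₂, rfl⟩, hk₂, z₂, hz₂, hy₂⟩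
  have hy : ∀ s, imgN σ hne (plusSeq x₁) (s + k₁) = imgN σ hne (plusSeq x₂) (s + k₂) := by
    intro s
    rw [← hz₁.eq_imgN σ hne, ← hz₂.eq_imgN σ hne, ← hy₁, ← hy₂]
  obtain ⟨M, hM⟩ := exists_cutsAgreeFrom σ hne hX hrec hx₁ hx₂ hy
  exact hM.eq σ hne hrm hk₁ hk₂ hy
end
end

section
/- The period-doubling-type morphism σ : a ↦ ba, b ↦ aa is weakly one-sided recognizable on X(σ)⁺ but not one-sided recognizable on X(σ)⁺: the sequence y = a σ(a) σ²(a) ⋯ satisfies y = a σ(y) and has the two distinct σ-representations (ay, 1) and (by, 1). -/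
open scoped Classical

noncomputable section

variable {A B : Type*}

/-- The morphism `a ↦ ba, b ↦ aa` on `{a, b}` with `a = false`, `b = true`. -/
def pdm : Bool → List Bool := fun c => if c then [false, false] else [true, false]

/-
With `a = false` and `b = true`, σ(c) = (¬c) a: σ(x) is x complemented on the even positions
and a on the odd ones. Hence σ is injective on sequences, and a representation (z, 1) of σ(x)
would force z_n = b for every n ≥ 1; but bb is not in the language of σ, because every σ-image
has a at every other position.

For the failure of recognizability let y_n = [ν₂(n + 1) is odd], the period-doubling sequence.
From ν₂(2m) = ν₂(m) + 1 and ν₂(2m + 1) = 0 one gets σ(c y) = (¬c) y for both letters c, so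
y = S σ(a y) = S σ(b y). Both a y and b y lie in X(σ)⁺: σ^N(a) reads [ν₂(i) is odd] at every
0 < i < 2^N, and a shift by 2^(2K) or 2^(2K+1), whose own parity is a resp. b, preserves the
parity of ν₂ on nonzero integers of absolute value < 2^(2K). So every window of the two-sided
point n ↦ [ν₂(n) is odd], with c at the origin, occurs in some σ^N(a).
-/

lemma List.ofFn_comp_val_eq_map_range {α : Type*} (n : ℕ) (f : ℕ → α) :
    List.ofFn (fun i : Fin n => f i) = (List.range n).map f :=
  List.ext_getElem (by simp) fun i _ _ => by simp

lemma List.infix_map_range_iff {α : Type*} {l : List α} {f : ℕ → α} {L : ℕ} :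
    l <:+: (List.range L).map f ↔
      ∃ o, o + l.length ≤ L ∧ l = (List.range' o l.length).map f := by
  constructor
  · rintro ⟨s, t, hst⟩
    have hlen := congrArg List.length hst
    simp only [List.length_append, List.length_map, List.length_range] at hlen
    refine ⟨s.length, by omega, List.ext_getElem (by simp) fun i hi _ => ?_⟩
    have := congrArg (·[s.length + i]?) hst
    simp only [List.append_assoc, List.getElem?_append_right (Nat.le_add_right _ _),
      add_tsub_cancel_left, List.getElem?_append_left hi, List.getElem?_map,
      List.getElem?_range (show s.length + i < L by omega), Option.map_some,
      List.getElem?_eq_getElem hi, Option.some_inj] at this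
    simpa using this
  · rintro ⟨o, hoL, hl⟩
    have hsplit : List.range L = List.range' 0 o ++ List.range' o l.length ++
        List.range' (o + l.length) (L - (o + l.length)) := by
      have h₁ := @List.range'_append_1 0 o l.length
      have h₂ := @List.range'_append_1 0 (o + l.length) (L - (o + l.length))
      simp only [zero_add] at h₁ h₂
      rw [h₁, h₂, List.range_eq_range']
      congr 1
      omega
    rw [hsplit, List.map_append, List.map_append, ← hl]
    exact List.infix_append _ _ _

lemma pdm_apply (c : Bool) : pdm c = [!c, false] := by cases c <;> rfl

def pdmImage (x : ℕ → Bool) : ℕ → Bool := fun j => if Even j then !x (j / 2) else false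

@[simp] lemma pdmImage_two_mul (x : ℕ → Bool) (m : ℕ) : pdmImage x (2 * m) = !x m := by
  simp [pdmImage]

@[simp] lemma pdmImage_two_mul_add_one (x : ℕ → Bool) (m : ℕ) :
    pdmImage x (2 * m + 1) = false := by
  simp [pdmImage]

lemma pdmImage_injective : Function.Injective pdmImage := fun x z h =>
  funext fun m => by simpa using congrFun h (2 * m)

lemma pdmImage_eq_false_or (g : ℕ → Bool) (p : ℕ) :
    pdmImage g p = false ∨ pdmImage g (p + 1) = false := by
  obtain ⟨m, rfl | rfl⟩ := Nat.even_or_odd' p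
  · simp
  · simp

lemma pdmImage_consSeq_add_two (c : Bool) (x : ℕ → Bool) (j : ℕ) :
    pdmImage (consSeq c x) (j + 2) = pdmImage x j := by
  obtain ⟨m, rfl | rfl⟩ := Nat.even_or_odd' j
  · rw [show 2 * m + 2 = 2 * (m + 1) by ring, pdmImage_two_mul, pdmImage_two_mul]; rfl
  · rw [show 2 * m + 1 + 2 = 2 * (m + 1) + 1 by ring, pdmImage_two_mul_add_one,
      pdmImage_two_mul_add_one]

lemma substWord_pdm_map_range (g : ℕ → Bool) (m : ℕ) :
    substWord pdm ((List.range m).map g) = (List.range (2 * m)).map (pdmImage g) := by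
  induction m with
  | zero => rfl
  | succ m ih =>
    rw [show 2 * (m + 1) = 2 * m + 1 + 1 by ring, List.range_succ, List.range_succ,
      List.range_succ, List.map_append, List.map_append, List.map_append, ← ih]
    simp [substWord, wordImg, pdm_apply]

lemma iterate_substWord_pdm_map_range (g : ℕ → Bool) (m N : ℕ) :
    (substWord pdm)^[N] ((List.range m).map g) =
      (List.range (2 ^ N * m)).map (pdmImage^[N] g) := by
  induction N with
  | zero => simp
  | succ N ih =>
    rw [Function.iterate_succ_apply', ih, substWord_pdm_map_range, Function.iterate_succ_apply',
      pow_succ, mul_comm _ 2, mul_assoc]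

lemma iterate_substWord_pdm_singleton (c : Bool) (N : ℕ) :
    (substWord pdm)^[N] [c] = (List.range (2 ^ N)).map (pdmImage^[N] fun _ => c) := by
  simpa using iterate_substWord_pdm_map_range (fun _ => c) 1 N

lemma prefixImg_pdm (x : ℕ → Bool) (n : ℕ) :
    prefixImg pdm x n = (List.range (2 * n)).map (pdmImage x) := by
  rw [prefixImg, List.ofFn_comp_val_eq_map_range]
  exact substWord_pdm_map_range x n

lemma oneSidedImage_pdm_iff {x y : ℕ → Bool} : OneSidedImage pdm x y ↔ y = pdmImage x := by
  constructor
  · intro h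
    funext i
    simpa [prefixImg_pdm] using h.2 (i + 1) i (by simp [prefixImg_pdm]; omega)
  · rintro rfl
    exact ⟨fun m => ⟨m, by simp [prefixImg_pdm]; omega⟩,
      fun n i h => by simp [prefixImg_pdm]⟩

lemma not_inLangSigma_pdm_true_true : ¬ InLangSigma pdm [true, true] := by
  rintro ⟨_ | N, c, h⟩
  · simpa using h.length_le
  · rw [Function.iterate_succ_apply', iterate_substWord_pdm_singleton,
      substWord_pdm_map_range, List.infix_map_range_iff] at h
    obtain ⟨o, -, ho⟩ := h
    simp only [List.length_cons, List.length_nil, List.range'_succ, List.range'_zero,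
      List.map_cons, List.map_nil, List.cons.injEq] at ho
    rcases pdmImage_eq_false_or (pdmImage^[N] fun _ => c) o with h | h <;> simp [h] at ho

lemma not_true_true_of_mem_setPlus {z : ℕ → Bool} (hz : z ∈ SetPlus (Xsig pdm)) (n : ℕ) :
    ¬ (z n = true ∧ z (n + 1) = true) := by
  obtain ⟨x, hx, rfl⟩ := hz
  rintro ⟨h₀, h₁⟩
  apply not_inLangSigma_pdm_true_true
  convert hx n 2 using 1
  simp only [plusSeq] at h₀ h₁
  push_cast at h₁
  simp [List.ofFn_succ, h₀, h₁]

lemma pdm_weakly_recognizable {x y z : ℕ → Bool} {k : ℕ} (hy : OneSidedImage pdm x y)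
    (hrep : IsRepN pdm (SetPlus (Xsig pdm)) y z k) : z = x ∧ k = 0 := by
  obtain ⟨hz, hk, w, hw, hyw⟩ := hrep
  rw [oneSidedImage_pdm_iff] at hy hw
  subst hy hw
  replace hk : k < 2 := by simpa [pdm_apply] using hk
  obtain rfl | rfl : k = 0 ∨ k = 1 := by omega
  · exact ⟨pdmImage_injective (funext hyw).symm, rfl⟩
  · have hb : ∀ n, z (n + 1) = true := fun n => by
      simpa [show 2 * n + 1 + 1 = 2 * (n + 1) by ring] using hyw (2 * n + 1)
    exact absurd ⟨hb 0, hb 1⟩ (not_true_true_of_mem_setPlus hz 1)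

def valParity (n : ℤ) : Bool := decide (Odd (padicValInt 2 n))

lemma valParity_two_mul {a : ℤ} (ha : a ≠ 0) : valParity (2 * a) = !valParity a := by
  have h := padicValInt_mul_eq_succ (p := 2) a ha
  simp only [Nat.cast_ofNat] at h
  simp [valParity, mul_comm 2 a, h, Nat.odd_add_one, -Nat.not_odd_iff_even]

lemma valParity_two_mul_add_one (a : ℤ) : valParity (2 * a + 1) = false := by
  have h : ¬ ((2 : ℕ) : ℤ) ∣ 2 * a + 1 := by omega
  simp [valParity, padicValInt.eq_zero_of_not_dvd h]

lemma valParity_two_pow (k : ℕ) : valParity (2 ^ k) = decide (Odd k) := by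
  induction k with
  | zero => simp [valParity]
  | succ k ih =>
    rw [pow_succ', valParity_two_mul (by positivity), ih]
    simp [Nat.odd_add_one, -Nat.not_odd_iff_even]

lemma valParity_two_pow_mul_add (e : ℕ) (t : ℤ) {j : ℤ} (hj : j ≠ 0) (hje : |j| < 2 ^ e) :
    valParity (2 ^ e * t + j) = valParity j := by
  induction e generalizing j with
  | zero => exact absurd (abs_lt.mp hje) (by omega)
  | succ e ih =>
    obtain ⟨m, rfl | rfl⟩ := Int.even_or_odd' j
    · have hm : m ≠ 0 := by omega
      have hme : |m| < 2 ^ e := by rw [abs_mul, pow_succ'] at hje; simpa using hje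
      have hne : 2 ^ e * t + m ≠ 0 := fun h =>
        hm (Int.eq_zero_of_abs_lt_dvd ⟨-t, by linarith⟩ hme)
      rw [show 2 ^ (e + 1) * t + 2 * m = 2 * (2 ^ e * t + m) by ring, valParity_two_mul hne,
        valParity_two_mul hm, ih hm hme]
    · rw [show 2 ^ (e + 1) * t + (2 * m + 1) = 2 * (2 ^ e * t + m) + 1 by ring,
        valParity_two_mul_add_one, valParity_two_mul_add_one]

lemma iterate_pdmImage_apply (g : ℕ → Bool) {N i : ℕ} (hi₀ : 0 < i) (hi : i < 2 ^ N) :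
    pdmImage^[N] g i = valParity i := by
  induction N generalizing i with
  | zero => omega
  | succ N ih =>
    rw [Function.iterate_succ_apply']
    obtain ⟨m, rfl | rfl⟩ := Nat.even_or_odd' i
    · rw [pow_succ] at hi
      rw [pdmImage_two_mul, ih (by omega) (by omega), Nat.cast_mul, Nat.cast_ofNat,
        valParity_two_mul (by omega)]
    · rw [pdmImage_two_mul_add_one]
      push_cast
      rw [valParity_two_mul_add_one]

lemma inLangSigma_pdm_of_valParity {n o N : ℕ} (w : ℕ → Bool) (ho : 0 < o)
    (hoN : o + n ≤ 2 ^ N) (hw : ∀ i < n, w i = valParity (o + i : ℕ)) :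
    InLangSigma pdm (List.ofFn fun i : Fin n => w i) := by
  refine ⟨N, false, ?_⟩
  rw [iterate_substWord_pdm_singleton, List.infix_map_range_iff]
  refine ⟨o, by simpa using hoN, List.ext_getElem (by simp) fun i hi _ => ?_⟩
  simp only [List.length_ofFn] at hi
  simp [hw i hi, iterate_pdmImage_apply _ (show 0 < o + i by omega) (show o + i < 2 ^ N by omega)]

def periodDoubling (n : ℕ) : Bool := valParity (n + 1)

def centredValParity (c : Bool) (n : ℤ) : Bool := if n = 0 then c else valParity n

lemma plusSeq_centredValParity (c : Bool) :
    plusSeq (centredValParity c) = consSeq c periodDoubling := by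
  funext n
  cases n with
  | zero => simp [plusSeq, centredValParity, consSeq]
  | succ n =>
    simp [plusSeq, centredValParity, consSeq, periodDoubling, show (n : ℤ) + 1 ≠ 0 by omega]

lemma centredValParity_eq_valParity_add (c : Bool) (K : ℕ) {j : ℤ} (hj : |j| < 2 ^ (2 * K)) :
    centredValParity c j = valParity (2 ^ (2 * K) * 2 ^ c.toNat + j) := by
  by_cases hj₀ : j = 0
  · subst hj₀
    rw [centredValParity, if_pos rfl, add_zero, ← pow_add, valParity_two_pow]
    cases c <;> simp
  · rw [centredValParity, if_neg hj₀, valParity_two_pow_mul_add _ _ hj₀ hj]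

lemma centredValParity_mem_Xsig (c : Bool) : centredValParity c ∈ Xsig pdm := by
  intro k n
  set K := k.natAbs + n
  set M : ℕ := 2 ^ (2 * K) with hM
  have hKM : K < M := Nat.lt_two_pow_self.trans_le (Nat.pow_le_pow_right two_pos (by omega))
  set P : ℕ := M * 2 ^ c.toNat
  have hP : M ≤ P ∧ P ≤ 2 * M := by
    cases c <;> simp only [P, Bool.toNat_false, Bool.toNat_true, pow_zero, pow_one, mul_one] <;>
      omega
  refine inLangSigma_pdm_of_valParity (o := (P + k).toNat) (N := 2 * K + 2)
    (fun i : ℕ => centredValParity c (k + i)) ?_ ?_ ?_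
  · omega
  · rw [pow_add, ← hM]; omega
  · have hMz : ((M : ℕ) : ℤ) = 2 ^ (2 * K) := by simp [M]
    have hPz : ((P : ℕ) : ℤ) = 2 ^ (2 * K) * 2 ^ c.toNat := by simp [P, M]
    intro i hi
    rw [centredValParity_eq_valParity_add c K (j := k + i) (by rw [abs_lt]; omega), ← hPz]
    congr 1
    omega

lemma consSeq_periodDoubling_mem_setPlus (c : Bool) :
    consSeq c periodDoubling ∈ SetPlus (Xsig pdm) :=
  ⟨_, centredValParity_mem_Xsig c, plusSeq_centredValParity c⟩

lemma pdmImage_consSeq_periodDoubling (c : Bool) :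
    pdmImage (consSeq c periodDoubling) = consSeq (!c) periodDoubling := by
  funext j
  obtain ⟨m, rfl | rfl⟩ := Nat.even_or_odd' j
  · cases m with
    | zero => rfl
    | succ m =>
      rw [pdmImage_two_mul, show 2 * (m + 1) = (2 * m + 1) + 1 by ring]
      simp only [consSeq, periodDoubling]
      rw [show ((2 * m + 1 : ℕ) : ℤ) + 1 = 2 * ((m : ℤ) + 1) by push_cast; ring,
        valParity_two_mul (by omega)]
  · rw [pdmImage_two_mul_add_one]
    simp only [consSeq, periodDoubling]
    rw [show ((2 * m : ℕ) : ℤ) + 1 = 2 * m + 1 by push_cast; ring, valParity_two_mul_add_one]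

lemma periodDoubling_eq_consSeq_pdmImage :
    periodDoubling = consSeq false (pdmImage periodDoubling) := by
  funext j
  cases j with
  | zero => simpa [periodDoubling, consSeq] using valParity_two_mul_add_one 0
  | succ j =>
    show periodDoubling (j + 1) = pdmImage periodDoubling j
    rw [← pdmImage_consSeq_add_two false, pdmImage_consSeq_periodDoubling]
    rfl

lemma isRepN_consSeq_periodDoubling (c : Bool) :
    IsRepN pdm (SetPlus (Xsig pdm)) periodDoubling (consSeq c periodDoubling) 1 :=
  ⟨consSeq_periodDoubling_mem_setPlus c, by simp [pdm_apply],
    _, oneSidedImage_pdm_iff.2 (pdmImage_consSeq_periodDoubling c).symm, fun _ => rfl⟩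

/-- `σ : a ↦ ba, b ↦ aa` is weakly one-sided recognizable on
`X(σ)⁺` but not one-sided recognizable: the sequence `y = a σ(a) σ²(a) ⋯`,
characterized by `y = a σ(y)`, has the two distinct σ-representations
`(ay, 1)` and `(by, 1)`. -/
theorem stmt13 :
    (∀ x ∈ SetPlus (Xsig pdm), ∀ y' : ℕ → Bool, OneSidedImage pdm x y' →
      ∀ z k, IsRepN pdm (SetPlus (Xsig pdm)) y' z k → z = x ∧ k = 0) ∧
    (∃ y : ℕ → Bool,
      (∃ z, OneSidedImage pdm y z ∧ y = consSeq false z) ∧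
      IsRepN pdm (SetPlus (Xsig pdm)) y (consSeq false y) 1 ∧
      IsRepN pdm (SetPlus (Xsig pdm)) y (consSeq true y) 1 ∧
      consSeq false y ≠ consSeq true y) ∧
    ¬ RecognizableN pdm (SetPlus (Xsig pdm)) := by
  have hne : consSeq false periodDoubling ≠ consSeq true periodDoubling := fun h =>
    Bool.false_ne_true (congrFun h 0)
  refine ⟨fun x _ y' hy z k hrep => pdm_weakly_recognizable hy hrep,
    ⟨periodDoubling, ⟨_, oneSidedImage_pdm_iff.2 rfl, periodDoubling_eq_consSeq_pdmImage⟩,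
      isRepN_consSeq_periodDoubling false, isRepN_consSeq_periodDoubling true, hne⟩,
    fun hrec => hne (hrec _ _ _ _ _ (isRepN_consSeq_periodDoubling false)
      (isRepN_consSeq_periodDoubling true)).1⟩
end
end
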